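/- arXiv:2105.00426 — 6 statements merged into one kernel-verified Lean document; each statement's English description precedes it below -/
import Mathlib

section
/- Let V be an oriented 4-dimensional real inner product space, and let a ∈ Λ²V be a unit vector lying in the self-dual part Λ²₊V (the +1 eigenspace of the Hodge star on Λ²V). Then the endomorphism K_a defined by g(K_a X, Y) = 2 g(a, X∧Y) satisfies K_a² = -Id, i.e., K_a is an orthogonal complex structure on V. -/
open scoped RealInnerProductSpace
open Module

/-- The basis `s₁ = e₁∧e₂ + e₃∧e₄`, `s₂ = e₁∧e₃ + e₄∧e₂`, `s₃ = e₁∧e₄ + e₂∧e₃` of the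
self-dual part `Λ²₊V`, built from an (oriented) orthonormal basis `e` of `V`, where the
wedge product is encoded by the bilinear map `w`. -/
noncomputable def sPlus {V W : Type*} [NormedAddCommGroup V] [InnerProductSpace ℝ V]
    [AddCommGroup W] [Module ℝ W] (w : V →ₗ[ℝ] V →ₗ[ℝ] W)
    (e : OrthonormalBasis (Fin 4) ℝ V) : Fin 3 → W :=
  ![w (e 0) (e 1) + w (e 2) (e 3),
    w (e 0) (e 2) + w (e 3) (e 1),
    w (e 0) (e 3) + w (e 1) (e 2)]

/-- `V` is an oriented 4-dimensional real inner product space and `W = Λ²V`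
(wedge `w`, induced inner product `gW` with `g(v₁∧v₂,v₃∧v₄) = (1/2)det[g(vᵢ,vⱼ)]`).
The self-dual space `Λ²₊V` (the `+1`-eigenspace of the Hodge star) is the span of
`s₁,s₂,s₃` for any oriented orthonormal basis.  If `a ∈ Λ²₊V` is a unit vector, then the
endomorphism `K_a`, defined by `g(K_a X, Y) = 2 g(a, X∧Y)`, satisfies `K_a² = -Id`,
i.e. `K_a` is an orthogonal complex structure on `V`. -/
theorem stmt1
    {V : Type*} [NormedAddCommGroup V] [InnerProductSpace ℝ V]
    [FiniteDimensional ℝ V] (hdim : finrank ℝ V = 4)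
    (ω : Orientation ℝ V (Fin 4))
    {W : Type*} [AddCommGroup W] [Module ℝ W]
    (w : V →ₗ[ℝ] V →ₗ[ℝ] W)
    (halt : ∀ v : V, w v v = 0)
    (hspan : Submodule.span ℝ {x : W | ∃ u v : V, w u v = x} = ⊤)
    (gW : W →ₗ[ℝ] W →ₗ[ℝ] ℝ)
    (hgWsymm : ∀ a b : W, gW a b = gW b a)
    (hgW : ∀ v₁ v₂ v₃ v₄ : V,
      gW (w v₁ v₂) (w v₃ v₄)
        = (1/2) * (⟪v₁, v₃⟫ * ⟪v₂, v₄⟫ - ⟪v₁, v₄⟫ * ⟪v₂, v₃⟫))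
    (K : W →ₗ[ℝ] (V →ₗ[ℝ] V))
    (hK : ∀ (a : W) (x y : V), ⟪K a x, y⟫ = 2 * gW a (w x y))
    (a : W)
    (e : OrthonormalBasis (Fin 4) ℝ V)
    (hor : e.toBasis.orientation = ω)
    (hself : a ∈ Submodule.span ℝ (Set.range (sPlus w e)))
    (hunit : gW a a = 1) :
    ∀ x : V, K a (K a x) = -x := by
  have ho : ∀ i j : Fin 4, ⟪e i, e j⟫ = if i = j then 1 else 0 :=
    orthonormal_iff_ite.mp e.orthonormal
  obtain ⟨c, hc⟩ := (Submodule.mem_span_range_iff_exists_fun ℝ).mp hself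
  set A : Fin 4 → Fin 4 → ℝ :=
    ![![0, c 0, c 1, c 2], ![-c 0, 0, c 2, -c 1],
      ![-c 1, -c 2, 0, c 0], ![-c 2, c 1, -c 0, 0]] with hA
  have hKe : ∀ i j : Fin 4, ⟪K a (e i), e j⟫ = A i j := by
    intro i j
    rw [hK, ← hc]
    fin_cases i <;> fin_cases j <;>
      simp [sPlus, hA, Fin.sum_univ_succ, map_add, map_smul, LinearMap.add_apply,
        LinearMap.smul_apply, smul_eq_mul, hgW, ho] <;> ring
  have hKei : ∀ i : Fin 4, K a (e i) = ∑ j : Fin 4, A i j • e j := by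
    intro i
    conv_lhs => rw [← e.sum_repr' (K a (e i))]
    refine Finset.sum_congr rfl fun j _ => ?_
    rw [real_inner_comm, hKe]
  have hnorm : c 0 * c 0 + c 1 * c 1 + c 2 * c 2 = 1 := by
    rw [← hunit, ← hc]
    simp [sPlus, Fin.sum_univ_succ, map_add, map_smul, LinearMap.add_apply,
      LinearMap.smul_apply, LinearMap.sum_apply, map_sum, smul_eq_mul, hgW, ho]
    ring
  have hKK : ∀ i : Fin 4, K a (K a (e i)) = -e i := by
    intro i
    rw [hKei, map_sum]
    simp only [map_smul, hKei]
    fin_cases i <;>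
      · simp [hA, Fin.sum_univ_four, smul_add, smul_smul]
        match_scalars <;> first
          | linear_combination -hnorm
          | linear_combination (-2 : ℝ) * hnorm
          | ring
  intro x
  conv_lhs => rw [← e.sum_repr' x]
  conv_rhs => rw [← e.sum_repr' x]
  rw [map_sum, map_sum]
  simp only [map_smul, hKK, smul_neg, ← Finset.sum_neg_distrib]
end

section
/- Let V be an oriented 4-dimensional real inner product space. If a ∈ Λ²₊V and b ∈ Λ²₋V, then the endomorphisms K_a and K_b of V commute: K_a ∘ K_b = K_b ∘ K_a. -/
/-!
In the convention `Mᵢⱼ = ⟪eᵢ, T eⱼ⟫` of `LinearMap.toMatrix`, `K` sends the frame `s⁺` of an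
orthonormal basis `e` to left and the frame `s⁻` of `e` to right multiplications by imaginary
quaternions on `ℍ ≅ ℝ⁴`, and these commute. The point is that `b` is anti-self-dual for another
oriented basis `e'`. Anti-self-duality of `T` has the basis-free form
`∑ᵢ vol(eᵢ, T eᵢ, z, t) = -2 ⟪T z, t⟫`: the left side is a metric trace, independent of the
orthonormal basis, and `vol` depends only on the orientation. In an oriented orthonormal basis
the identity says exactly that the matrix of `T` is a right multiplication.
-/

open scoped RealInnerProductSpace
open Module

/-- `s₁⁻,s₂⁻,s₃⁻`, the standard frame of the anti-self-dual space `Λ²₋V` associated with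
an (oriented) orthonormal basis `e`. -/
noncomputable def sMinus {V W : Type*} [NormedAddCommGroup V] [InnerProductSpace ℝ V]
    [AddCommGroup W] [Module ℝ W] (w : V →ₗ[ℝ] V →ₗ[ℝ] W)
    (e : OrthonormalBasis (Fin 4) ℝ V) : Fin 3 → W :=
  ![w (e 0) (e 1) - w (e 2) (e 3),
    w (e 0) (e 2) - w (e 3) (e 1),
    w (e 0) (e 3) - w (e 1) (e 2)]

namespace AlternatingMap

variable {R M N : Type*} [CommRing R] [AddCommGroup M] [Module R M] [AddCommGroup N] [Module R N]
  (f : M [⋀^Fin 4]→ₗ[R] N)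

def bilinFirstTwo (z t : M) : M →ₗ[R] M →ₗ[R] N :=
  LinearMap.mk₂ R (fun x y => f ![x, y, z, t])
    (fun x x' y => f.map_vecCons_add ![y, z, t] x x')
    (fun c x y => f.map_vecCons_smul ![y, z, t] c x)
    (fun x y y' => (f.curryLeft x).map_vecCons_add ![z, t] y y')
    (fun c x y => (f.curryLeft x).map_vecCons_smul ![z, t] c y)

def bilinLastTwo (x y : M) : M →ₗ[R] M →ₗ[R] N :=
  LinearMap.mk₂ R (fun z t => f ![x, y, z, t])
    (fun z z' t => ((f.curryLeft x).curryLeft y).map_vecCons_add ![t] z z')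
    (fun c z t => ((f.curryLeft x).curryLeft y).map_vecCons_smul ![t] c z)
    (fun z t t' => (((f.curryLeft x).curryLeft y).curryLeft z).map_vecCons_add ![] t t')
    (fun c z t => (((f.curryLeft x).curryLeft y).curryLeft z).map_vecCons_smul ![] c t)

@[simp]
theorem bilinFirstTwo_apply (x y z t : M) : f.bilinFirstTwo z t x y = f ![x, y, z, t] := rfl

@[simp]
theorem bilinLastTwo_apply (x y z t : M) : f.bilinLastTwo x y z t = f ![x, y, z, t] := rfl

end AlternatingMap

section Hodge

variable {V : Type*} [NormedAddCommGroup V] [InnerProductSpace ℝ V]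

theorem OrthonormalBasis.sum_apply_apply_self_eq {ι ι' : Type*} [Fintype ι] [Fintype ι']
    (B : V →ₗ[ℝ] V →ₗ[ℝ] ℝ) (e : OrthonormalBasis ι ℝ V) (e' : OrthonormalBasis ι' ℝ V) :
    ∑ i, B (e i) (e i) = ∑ j, B (e' j) (e' j) := by
  classical
  have expand : ∀ i, B (e i) (e i) = ∑ j, ∑ k, ⟪e' j, e i⟫ * ⟪e i, e' k⟫ * B (e' j) (e' k) := by
    intro i
    conv_lhs => rw [← e'.sum_repr' (e i)]
    simp only [map_sum, map_smul, LinearMap.sum_apply, LinearMap.smul_apply, smul_eq_mul,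
      Finset.mul_sum]
    rw [Finset.sum_comm]
    refine Finset.sum_congr rfl fun j _ => Finset.sum_congr rfl fun k _ => ?_
    rw [real_inner_comm (e i) (e' k)]
    ring
  calc ∑ i, B (e i) (e i)
      = ∑ j, ∑ k, (∑ i, ⟪e' j, e i⟫ * ⟪e i, e' k⟫) * B (e' j) (e' k) := by
        simp only [expand, Finset.sum_mul]
        rw [Finset.sum_comm]
        exact Finset.sum_congr rfl fun j _ => Finset.sum_comm
    _ = ∑ j, B (e' j) (e' j) := by
        simp [e.sum_inner_mul_inner, orthonormal_iff_ite.mp e'.orthonormal]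

/-- For `f` the volume form and `T` skew, twice the Hodge dual of the 2-form `⟪T ·, ·⟫`. -/
noncomputable def hodgeForm {ι : Type*} [Fintype ι] (f : V [⋀^Fin 4]→ₗ[ℝ] ℝ)
    (e : OrthonormalBasis ι ℝ V) (T : V →ₗ[ℝ] V) : V →ₗ[ℝ] V →ₗ[ℝ] ℝ :=
  ∑ i, f.bilinLastTwo (e i) (T (e i))

theorem hodgeForm_apply {ι : Type*} [Fintype ι] (f : V [⋀^Fin 4]→ₗ[ℝ] ℝ)
    (e : OrthonormalBasis ι ℝ V) (T : V →ₗ[ℝ] V) (z t : V) :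
    hodgeForm f e T z t = ∑ i, f ![e i, T (e i), z, t] := by
  simp [hodgeForm, LinearMap.sum_apply]

theorem hodgeForm_congr_basis {ι ι' : Type*} [Fintype ι] [Fintype ι']
    (f : V [⋀^Fin 4]→ₗ[ℝ] ℝ) (e : OrthonormalBasis ι ℝ V) (e' : OrthonormalBasis ι' ℝ V)
    (T : V →ₗ[ℝ] V) : hodgeForm f e T = hodgeForm f e' T := by
  ext z t
  simp only [hodgeForm_apply]
  exact OrthonormalBasis.sum_apply_apply_self_eq ((f.bilinFirstTwo z t).compl₂ T) e e'

end Hodge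

/-- The sign of `![i, j, k, l]` as a permutation, and `0` if an index repeats: the Vandermonde
product divided by its value `1! 2! 3! = 12` at the identity. -/
def leviCivita (i j k l : Fin 4) : ℤ :=
  ((j - i : ℤ) * (k - i) * (l - i) * (k - j) * (l - j) * (l - k)) / 12

theorem det_vecCons_indicator_eq_leviCivita : ∀ i j k l : Fin 4,
    (Matrix.of fun r c => if ![i, j, k, l] c = r then (1 : ℤ) else 0).det = leviCivita i j k l := by
  decide +kernel

theorem Orientation.volumeForm_orthonormalBasis {V : Type*} [NormedAddCommGroup V]
    [InnerProductSpace ℝ V] [Fact (finrank ℝ V = 4)] (ω : Orientation ℝ V (Fin 4))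
    (e : OrthonormalBasis (Fin 4) ℝ V) (he : e.toBasis.orientation = ω) (i j k l : Fin 4) :
    ω.volumeForm ![e i, e j, e k, e l] = leviCivita i j k l := by
  rw [ω.volumeForm_robust e he, Basis.det_apply, ← det_vecCons_indicator_eq_leviCivita,
    Int.cast_det]
  congr 1
  ext r c
  rw [Basis.toMatrix_apply, OrthonormalBasis.coe_toBasis_repr_apply,
    OrthonormalBasis.repr_apply_apply]
  fin_cases c <;> simp [orthonormal_iff_ite.mp e.orthonormal, eq_comm]

/-- Left multiplication by `c 0 • i + c 1 • j + c 2 • k` in the basis `1, i, j, k` of `ℍ`. -/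
def selfDualMatrix (c : Fin 3 → ℝ) : Matrix (Fin 4) (Fin 4) ℝ :=
  !![0, -c 0, -c 1, -c 2;
     c 0, 0, -c 2, c 1;
     c 1, c 2, 0, -c 0;
     c 2, -c 1, c 0, 0]

/-- Right multiplication by `d 0 • i + d 1 • j + d 2 • k` in the basis `1, i, j, k` of `ℍ`. -/
def antiSelfDualMatrix (d : Fin 3 → ℝ) : Matrix (Fin 4) (Fin 4) ℝ :=
  !![0, -d 0, -d 1, -d 2;
     d 0, 0, d 2, -d 1;
     d 1, -d 2, 0, d 0;
     d 2, d 1, -d 0, 0]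

theorem selfDualMatrix_mul_antiSelfDualMatrix_comm (c d : Fin 3 → ℝ) :
    selfDualMatrix c * antiSelfDualMatrix d = antiSelfDualMatrix d * selfDualMatrix c := by
  ext i j
  fin_cases i <;> fin_cases j <;>
    simp [selfDualMatrix, antiSelfDualMatrix, Matrix.mul_apply, Fin.sum_univ_four] <;> ring

def leviCivitaContraction (M : Matrix (Fin 4) (Fin 4) ℝ) : Matrix (Fin 4) (Fin 4) ℝ :=
  !![0, M 3 2 - M 2 3, M 1 3 - M 3 1, M 2 1 - M 1 2;
     M 2 3 - M 3 2, 0, M 3 0 - M 0 3, M 0 2 - M 2 0;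
     M 3 1 - M 1 3, M 0 3 - M 3 0, 0, M 1 0 - M 0 1;
     M 1 2 - M 2 1, M 2 0 - M 0 2, M 0 1 - M 1 0, 0]

theorem sum_leviCivita_eq_leviCivitaContraction (M : Matrix (Fin 4) (Fin 4) ℝ) (m n : Fin 4) :
    ∑ i, ∑ j, M j i * leviCivita i j m n = leviCivitaContraction M m n := by
  simp only [Fin.sum_univ_four, leviCivita]
  fin_cases m <;> fin_cases n <;> norm_num [leviCivitaContraction] <;> ring

theorem leviCivitaContraction_eq_neg_two_transpose_iff (M : Matrix (Fin 4) (Fin 4) ℝ) :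
    (∀ m n, leviCivitaContraction M m n = -2 * M n m) ↔ ∃ d, M = antiSelfDualMatrix d := by
  constructor
  · intro h
    refine ⟨![M 1 0, M 2 0, M 3 0], ?_⟩
    simp [Fin.forall_fin_succ, leviCivitaContraction] at h
    ext i j
    fin_cases i <;> fin_cases j <;> simp [antiSelfDualMatrix] <;> grind
  · rintro ⟨d, rfl⟩ m n
    fin_cases m <;> fin_cases n <;> simp [leviCivitaContraction, antiSelfDualMatrix] <;> ring

section Oriented

variable {V : Type*} [NormedAddCommGroup V] [InnerProductSpace ℝ V] [Fact (finrank ℝ V = 4)]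

theorem hodgeForm_volumeForm_apply_basis (ω : Orientation ℝ V (Fin 4))
    (e : OrthonormalBasis (Fin 4) ℝ V) (he : e.toBasis.orientation = ω) (T : V →ₗ[ℝ] V)
    (m n : Fin 4) :
    hodgeForm ω.volumeForm e T (e m) (e n)
      = leviCivitaContraction (LinearMap.toMatrix e.toBasis e.toBasis T) m n := by
  rw [hodgeForm_apply, ← sum_leviCivita_eq_leviCivitaContraction]
  refine Finset.sum_congr rfl fun i _ => ?_
  rw [← AlternatingMap.bilinFirstTwo_apply, ← e.toBasis.sum_repr (T (e i)), map_sum]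
  simp [LinearMap.toMatrix_apply, ω.volumeForm_orthonormalBasis e he, mul_comm]

theorem hodgeForm_volumeForm_eq_neg_two_inner_iff (ω : Orientation ℝ V (Fin 4))
    (e : OrthonormalBasis (Fin 4) ℝ V) (he : e.toBasis.orientation = ω) (T : V →ₗ[ℝ] V) :
    (∀ z t, hodgeForm ω.volumeForm e T z t = -2 * ⟪T z, t⟫) ↔
      ∃ d, LinearMap.toMatrix e.toBasis e.toBasis T = antiSelfDualMatrix d := by
  have hM : ∀ m n, LinearMap.toMatrix e.toBasis e.toBasis T n m = ⟪T (e m), e n⟫ := by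
    simp [LinearMap.toMatrix_apply, OrthonormalBasis.repr_apply_apply, real_inner_comm]
  simp only [← leviCivitaContraction_eq_neg_two_transpose_iff,
    ← hodgeForm_volumeForm_apply_basis ω e he, hM]
  refine ⟨fun h m n => h _ _, fun h => ?_⟩
  have hform : hodgeForm ω.volumeForm e T = -2 • (innerₗ V) ∘ₗ T :=
    LinearMap.ext_basis e.toBasis e.toBasis fun m n => by simpa using h m n
  simp [hform]

end Oriented

section Wedge

variable {V W : Type*} [NormedAddCommGroup V] [InnerProductSpace ℝ V] [AddCommGroup W]
  [Module ℝ W] {w : V →ₗ[ℝ] V →ₗ[ℝ] W} {gW : W →ₗ[ℝ] W →ₗ[ℝ] ℝ} {K : W →ₗ[ℝ] V →ₗ[ℝ] V}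

theorem toMatrix_apply_eq_gW (hK : ∀ (a : W) (x y : V), ⟪K a x, y⟫ = 2 * gW a (w x y))
    (e : OrthonormalBasis (Fin 4) ℝ V) (a : W) (i j : Fin 4) :
    LinearMap.toMatrix e.toBasis e.toBasis (K a) i j = 2 * gW a (w (e j) (e i)) := by
  rw [LinearMap.toMatrix_apply, OrthonormalBasis.coe_toBasis_repr_apply,
    OrthonormalBasis.repr_apply_apply, OrthonormalBasis.coe_toBasis, real_inner_comm, hK]

theorem exists_toMatrix_eq_selfDualMatrix
    (hgW : ∀ v₁ v₂ v₃ v₄ : V, gW (w v₁ v₂) (w v₃ v₄)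
      = (1/2) * (⟪v₁, v₃⟫ * ⟪v₂, v₄⟫ - ⟪v₁, v₄⟫ * ⟪v₂, v₃⟫))
    (hK : ∀ (a : W) (x y : V), ⟪K a x, y⟫ = 2 * gW a (w x y))
    (e : OrthonormalBasis (Fin 4) ℝ V) {a : W}
    (ha : a ∈ Submodule.span ℝ (Set.range (sPlus w e))) :
    ∃ c, LinearMap.toMatrix e.toBasis e.toBasis (K a) = selfDualMatrix c := by
  obtain ⟨c, rfl⟩ := (Submodule.mem_span_range_iff_exists_fun ℝ).mp ha
  refine ⟨c, Matrix.ext fun i j => ?_⟩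
  rw [toMatrix_apply_eq_gW hK]
  fin_cases i <;> fin_cases j <;>
    simp [sPlus, selfDualMatrix, Fin.sum_univ_three, hgW, orthonormal_iff_ite.mp e.orthonormal] <;>
    ring

theorem exists_toMatrix_eq_antiSelfDualMatrix
    (hgW : ∀ v₁ v₂ v₃ v₄ : V, gW (w v₁ v₂) (w v₃ v₄)
      = (1/2) * (⟪v₁, v₃⟫ * ⟪v₂, v₄⟫ - ⟪v₁, v₄⟫ * ⟪v₂, v₃⟫))
    (hK : ∀ (a : W) (x y : V), ⟪K a x, y⟫ = 2 * gW a (w x y))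
    (e : OrthonormalBasis (Fin 4) ℝ V) {b : W}
    (hb : b ∈ Submodule.span ℝ (Set.range (sMinus w e))) :
    ∃ d, LinearMap.toMatrix e.toBasis e.toBasis (K b) = antiSelfDualMatrix d := by
  obtain ⟨d, rfl⟩ := (Submodule.mem_span_range_iff_exists_fun ℝ).mp hb
  refine ⟨d, Matrix.ext fun i j => ?_⟩
  rw [toMatrix_apply_eq_gW hK]
  fin_cases i <;> fin_cases j <;>
    simp [sMinus, antiSelfDualMatrix, Fin.sum_univ_three, hgW,
      orthonormal_iff_ite.mp e.orthonormal] <;> ring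

end Wedge

theorem stmt2_general
    {V : Type*} [NormedAddCommGroup V] [InnerProductSpace ℝ V]
    (hdim : finrank ℝ V = 4)
    (ω : Orientation ℝ V (Fin 4))
    {W : Type*} [AddCommGroup W] [Module ℝ W]
    (w : V →ₗ[ℝ] V →ₗ[ℝ] W)
    (gW : W →ₗ[ℝ] W →ₗ[ℝ] ℝ)
    (hgW : ∀ v₁ v₂ v₃ v₄ : V,
      gW (w v₁ v₂) (w v₃ v₄)
        = (1/2) * (⟪v₁, v₃⟫ * ⟪v₂, v₄⟫ - ⟪v₁, v₄⟫ * ⟪v₂, v₃⟫))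
    (K : W →ₗ[ℝ] (V →ₗ[ℝ] V))
    (hK : ∀ (a : W) (x y : V), ⟪K a x, y⟫ = 2 * gW a (w x y))
    (a b : W)
    (e e' : OrthonormalBasis (Fin 4) ℝ V)
    (hor : e.toBasis.orientation = ω) (hor' : e'.toBasis.orientation = ω)
    (ha : a ∈ Submodule.span ℝ (Set.range (sPlus w e)))
    (hb : b ∈ Submodule.span ℝ (Set.range (sMinus w e'))) :
    K a ∘ₗ K b = K b ∘ₗ K a := by
  have : Fact (finrank ℝ V = 4) := ⟨hdim⟩
  obtain ⟨c, hc⟩ := exists_toMatrix_eq_selfDualMatrix hgW hK e ha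
  obtain ⟨d, hd⟩ : ∃ d, LinearMap.toMatrix e.toBasis e.toBasis (K b) = antiSelfDualMatrix d := by
    rw [← hodgeForm_volumeForm_eq_neg_two_inner_iff ω e hor, hodgeForm_congr_basis _ e e',
      hodgeForm_volumeForm_eq_neg_two_inner_iff ω e' hor']
    exact exists_toMatrix_eq_antiSelfDualMatrix hgW hK e' hb
  apply (LinearMap.toMatrix e.toBasis e.toBasis).injective
  rw [LinearMap.toMatrix_comp _ e.toBasis, LinearMap.toMatrix_comp _ e.toBasis, hc, hd,
    selfDualMatrix_mul_antiSelfDualMatrix_comm]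

/-- `V` an oriented 4-dimensional real inner product space, `W = Λ²V` with
wedge `w` and inner product `gW` as usual; `Λ²₊V` and `Λ²₋V` (the `±1`-eigenspaces of the
Hodge star) are the spans of `s₁±,s₂±,s₃±` for oriented orthonormal bases.  If
`a ∈ Λ²₊V` and `b ∈ Λ²₋V`, then the endomorphisms `K_a` and `K_b`
(`g(K_a X,Y) = 2g(a, X∧Y)`) commute: `K_a ∘ K_b = K_b ∘ K_a`. -/
theorem stmt2
    {V : Type*} [NormedAddCommGroup V] [InnerProductSpace ℝ V]
    [FiniteDimensional ℝ V] (hdim : finrank ℝ V = 4)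
    (ω : Orientation ℝ V (Fin 4))
    {W : Type*} [AddCommGroup W] [Module ℝ W]
    (w : V →ₗ[ℝ] V →ₗ[ℝ] W)
    (halt : ∀ v : V, w v v = 0)
    (hspan : Submodule.span ℝ {x : W | ∃ u v : V, w u v = x} = ⊤)
    (gW : W →ₗ[ℝ] W →ₗ[ℝ] ℝ)
    (hgWsymm : ∀ a b : W, gW a b = gW b a)
    (hgW : ∀ v₁ v₂ v₃ v₄ : V,
      gW (w v₁ v₂) (w v₃ v₄)
        = (1/2) * (⟪v₁, v₃⟫ * ⟪v₂, v₄⟫ - ⟪v₁, v₄⟫ * ⟪v₂, v₃⟫))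
    (K : W →ₗ[ℝ] (V →ₗ[ℝ] V))
    (hK : ∀ (a : W) (x y : V), ⟪K a x, y⟫ = 2 * gW a (w x y))
    (a b : W)
    (e e' : OrthonormalBasis (Fin 4) ℝ V)
    (hor : e.toBasis.orientation = ω) (hor' : e'.toBasis.orientation = ω)
    (ha : a ∈ Submodule.span ℝ (Set.range (sPlus w e)))
    (hb : b ∈ Submodule.span ℝ (Set.range (sMinus w e'))) :
    K a ∘ₗ K b = K b ∘ₗ K a :=
  stmt2_general hdim ω w gW hgW K hK a b e e' hor hor' ha hb
end

section
/- Let V be an oriented 4-dimensional real inner product space and let a, b ∈ Λ²₊V. Then K_a ∘ K_b = -g(a,b)·Id + K_{a×b}, where a×b denotes the cross product in the 3-dimensional oriented inner product space Λ²₊V. In particular, K_a and K_b anti-commute if and only if g(a,b) = 0. -/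
/-!
With respect to an orthonormal basis `e` of `V`, identified with the basis `1, i, j, k` of the
quaternions, `K_{s₁}, K_{s₂}, K_{s₃}` act as left multiplication by `i, j, k`. Hence `K_a`, for
`a = Σ cₖ sₖ`, is left multiplication by the imaginary quaternion `c`, and the theorem is the
quaternion identity `c d = -(c ⬝ d) + c × d` for imaginary quaternions; in particular
`c d + d c = -2 (c ⬝ d)`.
-/

open scoped RealInnerProductSpace
open Module Matrix

/-- The matrix of left multiplication by `u₀ i + u₁ j + u₂ k` in the basis `1, i, j, k`. -/
def quatLeftMulMatrix (u : Fin 3 → ℝ) : Matrix (Fin 4) (Fin 4) ℝ :=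
  !![0, -u 0, -u 1, -u 2;
     u 0, 0, -u 2, u 1;
     u 1, u 2, 0, -u 0;
     u 2, -u 1, u 0, 0]

theorem quatLeftMulMatrix_mul (c d : Fin 3 → ℝ) :
    quatLeftMulMatrix c * quatLeftMulMatrix d
      = -(c ⬝ᵥ d) • 1 + quatLeftMulMatrix (c ⨯₃ d) := by
  ext i j
  fin_cases i <;> fin_cases j <;>
    simp [quatLeftMulMatrix, Matrix.mul_apply, Fin.sum_univ_four, dotProduct,
      Fin.sum_univ_three, cross_apply] <;> ring

theorem quatLeftMulMatrix_anticomm (c d : Fin 3 → ℝ) :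
    quatLeftMulMatrix c * quatLeftMulMatrix d + quatLeftMulMatrix d * quatLeftMulMatrix c
      = -(2 * c ⬝ᵥ d) • 1 := by
  ext i j
  fin_cases i <;> fin_cases j <;>
    simp [quatLeftMulMatrix, dotProduct, Fin.sum_univ_three] <;> ring

section SelfDualFrame

variable {V : Type*} [NormedAddCommGroup V] [InnerProductSpace ℝ V]
  {W : Type*} [AddCommGroup W] [Module ℝ W] {w : V →ₗ[ℝ] V →ₗ[ℝ] W} {gW : W →ₗ[ℝ] W →ₗ[ℝ] ℝ}

theorem gW_sum_sPlus
    (hgW : ∀ v₁ v₂ v₃ v₄ : V,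
      gW (w v₁ v₂) (w v₃ v₄) = (1/2) * (⟪v₁, v₃⟫ * ⟪v₂, v₄⟫ - ⟪v₁, v₄⟫ * ⟪v₂, v₃⟫))
    (e : OrthonormalBasis (Fin 4) ℝ V) (c d : Fin 3 → ℝ) :
    gW (∑ k, c k • sPlus w e k) (∑ k, d k • sPlus w e k) = c ⬝ᵥ d := by
  have horth := orthonormal_iff_ite.mp e.orthonormal
  simp only [sPlus, Fin.isValue, Fin.sum_univ_three, cons_val_zero, smul_add, cons_val_one,
    cons_val, map_add, map_smul, LinearMap.add_apply, LinearMap.smul_apply, hgW, one_div,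
    inner_self_eq_norm_sq_to_K, OrthonormalBasis.norm_eq_one, Real.ringHom_apply, one_pow, mul_one,
    horth, zero_ne_one, ↓reduceIte, one_ne_zero, mul_zero, sub_zero, smul_eq_mul, Fin.reduceEq,
    sub_self, add_zero, zero_add, dotProduct]
  ring

theorem toMatrixOrthonormal_K_sum_sPlus [FiniteDimensional ℝ V]
    (hgW : ∀ v₁ v₂ v₃ v₄ : V,
      gW (w v₁ v₂) (w v₃ v₄) = (1/2) * (⟪v₁, v₃⟫ * ⟪v₂, v₄⟫ - ⟪v₁, v₄⟫ * ⟪v₂, v₃⟫))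
    {K : W →ₗ[ℝ] (V →ₗ[ℝ] V)} (hK : ∀ (a : W) (x y : V), ⟪K a x, y⟫ = 2 * gW a (w x y))
    (e : OrthonormalBasis (Fin 4) ℝ V) (u : Fin 3 → ℝ) :
    LinearMap.toMatrixOrthonormal e (K (∑ k, u k • sPlus w e k)) = quatLeftMulMatrix u := by
  have horth := orthonormal_iff_ite.mp e.orthonormal
  ext i j
  rw [LinearMap.toMatrixOrthonormal_apply_apply, real_inner_comm, hK]
  fin_cases i <;> fin_cases j <;>
    simp [quatLeftMulMatrix, Fin.sum_univ_three, sPlus, hgW, horth] <;> ring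

end SelfDualFrame

theorem stmt3_general
    {V : Type*} [NormedAddCommGroup V] [InnerProductSpace ℝ V]
    [FiniteDimensional ℝ V]
    {W : Type*} [AddCommGroup W] [Module ℝ W]
    (w : V →ₗ[ℝ] V →ₗ[ℝ] W)
    (gW : W →ₗ[ℝ] W →ₗ[ℝ] ℝ)
    (hgW : ∀ v₁ v₂ v₃ v₄ : V,
      gW (w v₁ v₂) (w v₃ v₄)
        = (1/2) * (⟪v₁, v₃⟫ * ⟪v₂, v₄⟫ - ⟪v₁, v₄⟫ * ⟪v₂, v₃⟫))
    (K : W →ₗ[ℝ] (V →ₗ[ℝ] V))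
    (hK : ∀ (a : W) (x y : V), ⟪K a x, y⟫ = 2 * gW a (w x y))
    (e : OrthonormalBasis (Fin 4) ℝ V)
    (c d : Fin 3 → ℝ)
    (a b : W)
    (ha : a = ∑ k, c k • sPlus w e k)
    (hb : b = ∑ k, d k • sPlus w e k) :
    (K a ∘ₗ K b
        = -(gW a b) • (LinearMap.id : V →ₗ[ℝ] V)
            + K (∑ k, (c ⨯₃ d) k • sPlus w e k))
      ∧ (K a ∘ₗ K b + K b ∘ₗ K a = 0 ↔ gW a b = 0) := by
  subst ha hb
  set M := LinearMap.toMatrixOrthonormal e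
  have hM : ∀ u, M (K (∑ k, u k • sPlus w e k)) = quatLeftMulMatrix u :=
    toMatrixOrthonormal_K_sum_sPlus hgW hK e
  have hcomp : ∀ u v, M (K (∑ k, u k • sPlus w e k) ∘ₗ K (∑ k, v k • sPlus w e k))
      = quatLeftMulMatrix u * quatLeftMulMatrix v := fun u v => by
    rw [← hM, ← hM]
    exact map_mul M _ _
  have hid : M LinearMap.id = 1 := map_one M
  have hg := gW_sum_sPlus hgW e c d
  constructor
  · apply EquivLike.injective M
    rw [hcomp, map_add, map_smul, hid, hM, hg, quatLeftMulMatrix_mul]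
  · rw [← (EquivLike.injective M).eq_iff, map_add, hcomp, hcomp, map_zero,
      quatLeftMulMatrix_anticomm, hg, smul_eq_zero, or_iff_left one_ne_zero, neg_eq_zero,
      mul_eq_zero, or_iff_right two_ne_zero]

/-- `V` an oriented 4-dimensional real inner product space, `W = Λ²V` with
wedge `w` and inner product `gW` as usual.  For `a, b ∈ Λ²₊V`, written in the
orthonormal oriented frame `s₁,s₂,s₃` of `Λ²₊V` as `a = Σ cₖ sₖ`, `b = Σ dₖ sₖ`, one has
`K_a ∘ K_b = -g(a,b)·Id + K_{a×b}`, where `a×b` is the cross product of the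
3-dimensional oriented inner product space `Λ²₊V` (i.e. has coordinates `c ×₃ d`).
In particular `K_a` and `K_b` anti-commute iff `g(a,b) = 0`. -/
theorem stmt3
    {V : Type*} [NormedAddCommGroup V] [InnerProductSpace ℝ V]
    [FiniteDimensional ℝ V] (hdim : finrank ℝ V = 4)
    (ω : Orientation ℝ V (Fin 4))
    {W : Type*} [AddCommGroup W] [Module ℝ W]
    (w : V →ₗ[ℝ] V →ₗ[ℝ] W)
    (halt : ∀ v : V, w v v = 0)
    (hspan : Submodule.span ℝ {x : W | ∃ u v : V, w u v = x} = ⊤)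
    (gW : W →ₗ[ℝ] W →ₗ[ℝ] ℝ)
    (hgWsymm : ∀ a b : W, gW a b = gW b a)
    (hgW : ∀ v₁ v₂ v₃ v₄ : V,
      gW (w v₁ v₂) (w v₃ v₄)
        = (1/2) * (⟪v₁, v₃⟫ * ⟪v₂, v₄⟫ - ⟪v₁, v₄⟫ * ⟪v₂, v₃⟫))
    (K : W →ₗ[ℝ] (V →ₗ[ℝ] V))
    (hK : ∀ (a : W) (x y : V), ⟪K a x, y⟫ = 2 * gW a (w x y))
    (e : OrthonormalBasis (Fin 4) ℝ V)
    (hor : e.toBasis.orientation = ω)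
    (c d : Fin 3 → ℝ)
    (a b : W)
    (ha : a = ∑ k, c k • sPlus w e k)
    (hb : b = ∑ k, d k • sPlus w e k) :
    (K a ∘ₗ K b
        = -(gW a b) • (LinearMap.id : V →ₗ[ℝ] V)
            + K (∑ k, (c ⨯₃ d) k • sPlus w e k))
      ∧ (K a ∘ₗ K b + K b ∘ₗ K a = 0 ↔ gW a b = 0) :=
  stmt3_general w gW hgW K hK e c d a b ha hb
end

section
/- Let f : (N,h) → (N',h') be a smooth map of Riemannian manifolds, and let D, D' be metric connections on N, N' whose torsion tensors T, T' are totally skew-symmetric (i.e., (X,Y,Z) ↦ h(T(X,Y),Z) and the analogous form for T' are alternating 3-forms). Then the trace (with respect to h) of the second fundamental form of f computed with D and D' equals the trace of the second fundamental form computed with the Levi-Civita connections: Trace_h II_f(D,D') = Trace_h II_f(∇,∇'). Consequently, f is harmonic if and only if Trace_h II_f(D,D') = 0. -/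
/-- Let `f : (N,h) → (N',h')` be a smooth map and let `D`, `D'` be metric
connections on `N`, `N'` with totally skew-symmetric torsions `T`, `T'`.  Here the setup
is encoded algebraically at a point: `V` is the module of vector fields on `N` with an
`h`-orthonormal frame `E`; `V'` is the module of sections of the pull-back bundle
`f*TN'`; `fstar` is the differential of `f`; `nabN`/`DN` are the Levi-Civita connection
`∇` and the connection `D` on `TN`, with `DN = ∇ + (1/2)T` and `T` alternating;
`nabP`/`DP` are the pull-back connections on `f*TN'` induced by the Levi-Civita
connection `∇'` and by `D'`, so that `D'^*_X (f_*Y) = ∇'^*_X(f_*Y) + (1/2)T'(f_*X,f_*Y)`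
with the (pulled-back) torsion `T'` alternating.  Then
`Trace_h II_f(D,D') = Trace_h II_f(∇,∇')`, where `II_f(D,D')(X,Y) = (D̂_X f_*)(Y)`;
consequently `f` is harmonic (i.e. `Trace_h II_f(∇,∇') = 0`) iff
`Trace_h II_f(D,D') = 0`. -/
theorem stmt5
    {V V' : Type*} [AddCommGroup V] [Module ℝ V] [AddCommGroup V'] [Module ℝ V']
    (n : ℕ) (E : Fin n → V)
    (fstar : V →+ V')
    (nabN DN TN : V → V → V)
    (nabP DP : V → V' → V')
    (T' : V' → V' → V')
    (hDN : ∀ X Y : V, DN X Y = nabN X Y + (1/2 : ℝ) • TN X Y)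
    (hTN_alt : ∀ X : V, TN X X = 0)
    (hDP : ∀ X Y : V,
      DP X (fstar Y) = nabP X (fstar Y) + (1/2 : ℝ) • T' (fstar X) (fstar Y))
    (hT'_alt : ∀ W : V', T' W W = 0) :
    (∑ i, (DP (E i) (fstar (E i)) - fstar (DN (E i) (E i)))
        = ∑ i, (nabP (E i) (fstar (E i)) - fstar (nabN (E i) (E i))))
      ∧ ((∑ i, (DP (E i) (fstar (E i)) - fstar (DN (E i) (E i))) = 0)
          ↔ (∑ i, (nabP (E i) (fstar (E i)) - fstar (nabN (E i) (E i))) = 0)) := by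
  have key : ∀ i, DP (E i) (fstar (E i)) - fstar (DN (E i) (E i))
      = nabP (E i) (fstar (E i)) - fstar (nabN (E i) (E i)) := by
    intro i
    rw [hDP, hDN, hT'_alt, hTN_alt, smul_zero, smul_zero, add_zero, add_zero]
  have h1 : (∑ i, (DP (E i) (fstar (E i)) - fstar (DN (E i) (E i))))
      = ∑ i, (nabP (E i) (fstar (E i)) - fstar (nabN (E i) (E i))) :=
    Finset.sum_congr rfl fun i _ => key i
  exact ⟨h1, by rw [h1]⟩
end

section
/- Let (M,g,J) be a Riemannian 4-manifold with Hermitian structure J, and let 𝔍 be the section of Λ²₊TM with g(𝔍, X∧Y) = (1/2)g(JX,Y). Then ∇_X 𝔍 = (1/2)(JX ∧ B + X ∧ JB), where B is the vector field dual to the Lee form θ = -δΩ∘J. -/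
private lemma halfc0 {C : Type*} [CommRing C] [Algebra ℝ C] (x : C) (h : x + x = 0) : x = 0 := by
  have h1 : ((1:ℝ)/2) • (x + x) = 0 := by rw [h, smul_zero]
  rw [smul_add, ← add_smul] at h1
  norm_num at h1
  exact h1

private lemma eightc0 {C : Type*} [CommRing C] [Algebra ℝ C] (x : C)
    (h : x + x + x + x + x + x + x + x = 0) : x = 0 := by
  apply halfc0
  apply halfc0
  apply halfc0
  linear_combination h

private lemma fin4cases {P : Fin 4 → Prop} (h0 : P 0) (h1 : P 1) (h2 : P 2) (h3 : P 3) :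
    ∀ i, P i := by
  intro i
  fin_cases i <;> assumption


set_option maxHeartbeats 1000000 in
private lemma corePf {C : Type*} [CommRing C] [Algebra ℝ C] (jm Fp : Fin 4 → Fin 4 → C)
    (hsJ : ∀ a b, jm a b = - jm b a)
    (hsF : ∀ a b, Fp a b = - Fp b a)
    (hQd : ∀ a, jm a 0 * jm 0 a + jm a 1 * jm 1 a + jm a 2 * jm 2 a + jm a 3 * jm 3 a = -1)
    (hQo : ∀ a b, a ≠ b → jm a 0 * jm 0 b + jm a 1 * jm 1 b + jm a 2 * jm 2 b + jm a 3 * jm 3 b = 0)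
    (hR : ∀ a b, jm a 0 * Fp 0 b + jm a 1 * Fp 1 b + jm a 2 * Fp 2 b + jm a 3 * Fp 3 b
        = jm b 0 * Fp a 0 + jm b 1 * Fp a 1 + jm b 2 * Fp a 2 + jm b 3 * Fp a 3) :
    ∀ a b c d, Fp a b * jm c d - Fp a c * jm b d + Fp a d * jm b c
      + Fp b c * jm a d - Fp b d * jm a c + Fp c d * jm a b = 0 := by
  set Gf : Fin 4 → Fin 4 → Fin 4 → Fin 4 → C := fun a b c d =>
    Fp a b * jm c d - Fp a c * jm b d + Fp a d * jm b c
      + Fp b c * jm a d - Fp b d * jm a c + Fp c d * jm a b with hGf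
  have hK : Gf 0 1 2 3 = 0 := by
    show Fp 0 1 * jm 2 3 - Fp 0 2 * jm 1 3 + Fp 0 3 * jm 1 2
      + Fp 1 2 * jm 0 3 - Fp 1 3 * jm 0 2 + Fp 2 3 * jm 0 1 = 0
    exact eightc0 _ (by linear_combination (-2*jm 0 1*jm 2 3 + 2*jm 0 2*jm 1 3 - 2*jm 0 3*jm 1 2)*(hR 0 0) + (-2*jm 0 1*jm 2 3 + 2*jm 0 2*jm 1 3 - 2*jm 0 3*jm 1 2)*(hR 1 1) + (-2*jm 0 1*jm 2 3 + 2*jm 0 2*jm 1 3 - 2*jm 0 3*jm 1 2)*(hR 2 2) + (-2*jm 0 1*jm 2 3 + 2*jm 0 2*jm 1 3 - 2*jm 0 3*jm 1 2)*(hR 3 3) + (-2*Fp 1 0*jm 2 3 + 2*Fp 1 0*jm 3 2 + 2*Fp 2 0*jm 1 3 - 2*Fp 2 0*jm 3 1 - 2*Fp 3 0*jm 1 2 + 2*Fp 3 0*jm 2 1)*(hQd 0) + (2*Fp 0 0*jm 2 3 - 2*Fp 0 0*jm 3 2 - 2*Fp 2 0*jm 0 3 + 2*Fp 2 0*jm 3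 0 + 2*Fp 3 0*jm 0 2 - 2*Fp 3 0*jm 2 0)*(hQo 0 1 (by decide)) + (-2*Fp 0 0*jm 1 3 + 2*Fp 0 0*jm 3 1 + 2*Fp 1 0*jm 0 3 - 2*Fp 1 0*jm 3 0 - 2*Fp 3 0*jm 0 1 + 2*Fp 3 0*jm 1 0)*(hQo 0 2 (by decide)) + (2*Fp 0 0*jm 1 2 - 2*Fp 0 0*jm 2 1 - 2*Fp 1 0*jm 0 2 + 2*Fp 1 0*jm 2 0 + 2*Fp 2 0*jm 0 1 - 2*Fp 2 0*jm 1 0)*(hQo 0 3 (by decide)) + (-2*Fp 1 1*jm 2 3 + 2*Fp 1 1*jm 3 2 + 2*Fp 2 1*jm 1 3 - 2*Fp 2 1*jm 3 1 - 2*Fp 3 1*jm 1 2 + 2*Fp 3 1*jm 2 1)*(hQo 1 0 (by decide)) + (2*Fp 0 1*jm 2 3 - 2*Fp 0 1*jm 3 2 - 2*Fp 2 1*jm 0 3 + 2*Fp 2 1*jm 3 0 + 2*Fp 3 1*jm 0 2 - 2*Fp 3 1*jm 2 0)*(hQd 1) + (-2*Fp 0 1*jm 1 3 + 2*Fp 0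 1*jm 3 1 + 2*Fp 1 1*jm 0 3 - 2*Fp 1 1*jm 3 0 - 2*Fp 3 1*jm 0 1 + 2*Fp 3 1*jm 1 0)*(hQo 1 2 (by decide)) + (2*Fp 0 1*jm 1 2 - 2*Fp 0 1*jm 2 1 - 2*Fp 1 1*jm 0 2 + 2*Fp 1 1*jm 2 0 + 2*Fp 2 1*jm 0 1 - 2*Fp 2 1*jm 1 0)*(hQo 1 3 (by decide)) + (-2*Fp 1 2*jm 2 3 + 2*Fp 1 2*jm 3 2 + 2*Fp 2 2*jm 1 3 - 2*Fp 2 2*jm 3 1 - 2*Fp 3 2*jm 1 2 + 2*Fp 3 2*jm 2 1)*(hQo 2 0 (by decide)) + (2*Fp 0 2*jm 2 3 - 2*Fp 0 2*jm 3 2 - 2*Fp 2 2*jm 0 3 + 2*Fp 2 2*jm 3 0 + 2*Fp 3 2*jm 0 2 - 2*Fp 3 2*jm 2 0)*(hQo 2 1 (by decide)) + (-2*Fp 0 2*jm 1 3 + 2*Fp 0 2*jm 3 1 + 2*Fp 1 2*jm 0 3 - 2*Fp 1 2*jm 3 0 - 2*Fp 3 2*jm 0 1 + 2*Fp 3 2*jm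 1 0)*(hQd 2) + (2*Fp 0 2*jm 1 2 - 2*Fp 0 2*jm 2 1 - 2*Fp 1 2*jm 0 2 + 2*Fp 1 2*jm 2 0 + 2*Fp 2 2*jm 0 1 - 2*Fp 2 2*jm 1 0)*(hQo 2 3 (by decide)) + (-2*Fp 1 3*jm 2 3 + 2*Fp 1 3*jm 3 2 + 2*Fp 2 3*jm 1 3 - 2*Fp 2 3*jm 3 1 - 2*Fp 3 3*jm 1 2 + 2*Fp 3 3*jm 2 1)*(hQo 3 0 (by decide)) + (2*Fp 0 3*jm 2 3 - 2*Fp 0 3*jm 3 2 - 2*Fp 2 3*jm 0 3 + 2*Fp 2 3*jm 3 0 + 2*Fp 3 3*jm 0 2 - 2*Fp 3 3*jm 2 0)*(hQo 3 1 (by decide)) + (-2*Fp 0 3*jm 1 3 + 2*Fp 0 3*jm 3 1 + 2*Fp 1 3*jm 0 3 - 2*Fp 1 3*jm 3 0 - 2*Fp 3 3*jm 0 1 + 2*Fp 3 3*jm 1 0)*(hQo 3 2 (by decide)) + (2*Fp 0 3*jm 1 2 - 2*Fp 0 3*jm 2 1 - 2*Fp 1 3*jm 0 2 + 2*Fp 1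 3*jm 2 0 + 2*Fp 2 3*jm 0 1 - 2*Fp 2 3*jm 1 0)*(hQd 3) + (2*jm 0 0*jm 0 0*jm 2 3 - 2*jm 0 0*jm 0 0*jm 3 2 + 2*jm 0 0*jm 0 2*jm 3 0 - 2*jm 0 0*jm 0 3*jm 2 0 + 2*jm 0 1*jm 0 1*jm 2 3 - 2*jm 0 1*jm 1 0*jm 3 2 + 2*jm 0 1*jm 1 2*jm 3 0 - 2*jm 0 1*jm 1 3*jm 2 0 + 2*jm 0 2*jm 0 2*jm 2 3 - 2*jm 0 2*jm 0 3*jm 2 2 + 2*jm 0 2*jm 0 3*jm 3 3 + 2*jm 0 2*jm 1 0*jm 1 3 - 2*jm 0 2*jm 2 0*jm 3 2 + 2*jm 0 2*jm 2 2*jm 3 0 - 2*jm 0 3*jm 0 3*jm 3 2 - 2*jm 0 3*jm 1 0*jm 1 2 - 2*jm 0 3*jm 2 0*jm 3 3 + 2*jm 0 3*jm 2 3*jm 3 0 + 2*jm 2 3 - 2*jm 3 2)*(hsF 0 1) + (2*jm 0 0*jm 0 0*jm 1 2 - 2*jm 0 0*jm 0 0*jm 2 1 + 2*jm 0 0*jm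 0 1*jm 2 0 - 2*jm 0 0*jm 0 2*jm 1 0 + 2*jm 0 1*jm 0 1*jm 1 2 - 2*jm 0 1*jm 0 2*jm 1 1 + 2*jm 0 1*jm 0 2*jm 2 2 + 2*jm 0 1*jm 0 3*jm 2 3 + 2*jm 0 1*jm 0 3*jm 3 2 - 2*jm 0 1*jm 1 0*jm 2 1 + 2*jm 0 1*jm 1 1*jm 2 0 - 2*jm 0 1*jm 2 3*jm 3 0 - 2*jm 0 2*jm 0 2*jm 2 1 - 2*jm 0 2*jm 0 3*jm 1 3 - 2*jm 0 2*jm 0 3*jm 3 1 - 2*jm 0 2*jm 1 0*jm 2 2 + 2*jm 0 2*jm 1 2*jm 2 0 + 2*jm 0 2*jm 1 3*jm 3 0 + 2*jm 0 3*jm 0 3*jm 1 2 - 2*jm 0 3*jm 1 0*jm 3 2 + 2*jm 0 3*jm 2 0*jm 3 1 - 2*jm 0 3*jm 2 1*jm 3 0 + 2*jm 1 2 - 2*jm 2 1)*(hsF 0 3) + (2*jm 0 0*jm 1 0*jm 1 2 - 2*jm 0 0*jm 1 0*jm 2 1 + 2*jm 0 1*jm 1 0*jm 2 0 + 2*jm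 0 1*jm 1 1*jm 1 2 + 2*jm 0 1*jm 1 2*jm 2 2 + 2*jm 0 1*jm 1 3*jm 2 3 + 2*jm 0 1*jm 1 3*jm 3 2 - 2*jm 0 1*jm 2 3*jm 3 1 - 2*jm 0 2 - 2*jm 0 2*jm 1 0*jm 1 0 - 2*jm 0 2*jm 1 1*jm 1 1 - 2*jm 0 2*jm 1 2*jm 2 1 - 2*jm 0 2*jm 1 3*jm 1 3 + 2*jm 0 3*jm 1 2*jm 1 3 - 2*jm 0 3*jm 1 2*jm 3 1 - 2*jm 1 0*jm 1 1*jm 2 1 - 2*jm 1 0*jm 1 2*jm 2 2 - 2*jm 1 0*jm 1 3*jm 3 2 + 2*jm 1 1*jm 1 1*jm 2 0 + 2*jm 1 2*jm 1 2*jm 2 0 + 2*jm 1 2*jm 1 3*jm 3 0 + 2*jm 1 3*jm 2 0*jm 3 1 - 2*jm 1 3*jm 2 1*jm 3 0 + 2*jm 2 0)*(hsF 1 3) + (-2*jm 0 0*jm 0 0*jm 1 3 + 2*jm 0 0*jm 0 0*jm 3 1 - 2*jm 0 0*jm 0 1*jm 3 0 + 2*jm 0 0*jm 0 3*jm 1 0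 - 2*jm 0 1*jm 0 1*jm 1 3 + 2*jm 0 1*jm 0 3*jm 1 1 - 2*jm 0 1*jm 0 3*jm 3 3 + 2*jm 0 1*jm 1 0*jm 3 1 - 2*jm 0 1*jm 1 1*jm 3 0 - 2*jm 0 1*jm 2 0*jm 2 3 - 2*jm 0 2*jm 0 2*jm 1 3 + 2*jm 0 2*jm 0 3*jm 1 2 + 2*jm 0 2*jm 0 3*jm 2 1 + 2*jm 0 2*jm 1 0*jm 2 3 + 2*jm 0 2*jm 2 0*jm 3 1 - 2*jm 0 2*jm 2 1*jm 3 0 + 2*jm 0 3*jm 0 3*jm 3 1 + 2*jm 0 3*jm 1 0*jm 3 3 - 2*jm 0 3*jm 1 2*jm 2 0 - 2*jm 0 3*jm 1 3*jm 3 0 - 2*jm 1 3 + 2*jm 3 1)*(hsF 0 2) + (-2*Fp 0 1*jm 0 1*jm 0 3 + 2*Fp 0 1*jm 1 2*jm 3 2 + 2*Fp 0 1*jm 1 3*jm 3 3 - 4*Fp 0 2*jm 0 2*jm 0 3 + 2*Fp 0 2*jm 0 2*jm 3 0 - 2*Fp 0 2*jm 1 2*jm 1 3 - 2*Fp 0 2*jm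 1 2*jm 3 1 + 2*Fp 0 2*jm 1 3*jm 2 1 + 2*Fp 0 2*jm 2 2*jm 3 2 + 2*Fp 0 2*jm 2 3*jm 3 3 + 4*Fp 0 3 - 2*Fp 0 3*jm 0 1*jm 0 1 + 2*Fp 0 3*jm 0 2*jm 0 2 + 4*Fp 0 3*jm 0 3*jm 3 0 + 2*Fp 0 3*jm 1 3*jm 3 1 + 2*Fp 0 3*jm 3 2*jm 3 2 + 2*Fp 0 3*jm 3 3*jm 3 3 + 2*Fp 1 2*jm 0 1*jm 2 3 + 2*Fp 1 2*jm 0 1*jm 3 2 + 4*Fp 1 2*jm 1 2*jm 3 0 + 2*Fp 1 3*jm 0 2*jm 1 2 + 2*Fp 1 3*jm 1 3*jm 3 0 - 2*Fp 2 3*jm 0 1*jm 2 1 + 2*Fp 2 3*jm 0 2*jm 2 2 + 2*Fp 2 3*jm 0 3*jm 3 2 + 2*Fp 2 3*jm 2 3*jm 3 0 - 2*Fp 2 3*jm 3 0*jm 3 2)*(hsJ 1 2) + (-2*jm 0 0*jm 1 0*jm 1 3 + 2*jm 0 0*jm 1 0*jm 3 1 - 2*jm 0 1*jm 1 0*jm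 3 0 - 2*jm 0 1*jm 1 1*jm 1 3 - 2*jm 0 1*jm 1 3*jm 3 3 - 2*jm 0 1*jm 2 1*jm 2 3 - 2*jm 0 2*jm 1 2*jm 1 3 + 2*jm 0 2*jm 1 3*jm 2 1 + 2*jm 0 3 + 2*jm 0 3*jm 1 0*jm 1 0 + 2*jm 0 3*jm 1 1*jm 1 1 + 2*jm 0 3*jm 1 2*jm 1 2 + 2*jm 0 3*jm 1 3*jm 3 1 + 2*jm 1 0*jm 1 1*jm 3 1 + 2*jm 1 0*jm 1 2*jm 2 3 + 2*jm 1 0*jm 1 3*jm 3 3 - 2*jm 1 1*jm 1 1*jm 3 0 - 2*jm 1 2*jm 1 3*jm 2 0 + 2*jm 1 2*jm 2 0*jm 3 1 - 2*jm 1 2*jm 2 1*jm 3 0 - 2*jm 1 3*jm 1 3*jm 3 0 - 2*jm 3 0)*(hsF 1 2) + (2*jm 0 0*jm 1 2*jm 2 0 - 2*jm 0 0*jm 2 0*jm 2 1 + 2*jm 0 1 + 2*jm 0 1*jm 1 2*jm 2 1 + 2*jm 0 1*jm 2 0*jm 2 0 + 2*jm 0 1*jm 2 2*jm 2 2 + 2*jm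 0 1*jm 2 3*jm 2 3 - 2*jm 0 2*jm 1 0*jm 2 0 - 2*jm 0 2*jm 1 1*jm 2 1 - 2*jm 0 2*jm 1 3*jm 2 3 + 2*jm 0 2*jm 1 3*jm 3 2 - 2*jm 0 2*jm 2 1*jm 2 2 - 2*jm 0 2*jm 2 3*jm 3 1 + 2*jm 0 3*jm 1 2*jm 2 3 - 2*jm 0 3*jm 1 2*jm 3 2 - 2*jm 1 0 - 2*jm 1 0*jm 2 1*jm 2 1 - 2*jm 1 0*jm 2 2*jm 2 2 - 2*jm 1 0*jm 2 3*jm 3 2 + 2*jm 1 1*jm 2 0*jm 2 1 + 2*jm 1 2*jm 2 0*jm 2 2 + 2*jm 1 2*jm 2 3*jm 3 0 + 2*jm 2 0*jm 2 3*jm 3 1 - 2*jm 2 1*jm 2 3*jm 3 0)*(hsF 2 3) + (2*Fp 0 1*jm 0 1*jm 0 2 - 2*Fp 0 1*jm 1 3*jm 2 3 - 4*Fp 0 2 + 2*Fp 0 2*jm 0 1*jm 0 1 + 4*Fp 0 2*jm 0 2*jm 0 2 - 2*Fp 0 2*jm 0 3*jm 0 3 + 2*Fp 0 2*jm 1 2*jm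 1 2 - 2*Fp 0 2*jm 2 3*jm 2 3 + 6*Fp 0 3*jm 0 2*jm 0 3 - 2*Fp 0 3*jm 1 2*jm 3 1 - 2*Fp 0 3*jm 2 3*jm 3 3 + 2*Fp 1 2*jm 0 2*jm 1 2 - 2*Fp 1 2*jm 0 3*jm 1 3 + 2*Fp 1 3*jm 0 1*jm 2 3 + 2*Fp 1 3*jm 0 1*jm 3 2 + 4*Fp 1 3*jm 0 2*jm 1 3 - 2*Fp 2 3*jm 0 1*jm 3 1 + 4*Fp 2 3*jm 0 2*jm 2 3 - 2*Fp 2 3*jm 0 2*jm 3 2 + 2*Fp 2 3*jm 0 3*jm 3 3)*(hsJ 1 3) + (4*Fp 0 1 - 4*Fp 0 1*jm 0 1*jm 0 1 - 2*Fp 0 1*jm 0 2*jm 0 2 + 2*Fp 0 1*jm 0 3*jm 0 3 - 2*Fp 0 1*jm 1 2*jm 1 2 + 2*Fp 0 1*jm 1 3*jm 1 3 - 2*Fp 0 2*jm 0 1*jm 0 2 + 2*Fp 0 2*jm 1 3*jm 2 3 - 6*Fp 0 3*jm 0 1*jm 0 3 - 2*Fp 0 3*jm 1 2*jm 3 2 +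 2*Fp 0 3*jm 1 3*jm 3 3 - 2*Fp 1 2*jm 0 1*jm 1 2 - 2*Fp 1 2*jm 0 3*jm 2 3 - 6*Fp 1 3*jm 0 1*jm 1 3 + 2*Fp 1 3*jm 0 2*jm 3 2 - 2*Fp 1 3*jm 0 3*jm 3 3 - 4*Fp 2 3*jm 0 1*jm 2 3)*(hsJ 2 3) + (-jm 0 0*jm 0 1*jm 2 3 + jm 0 0*jm 0 1*jm 3 2 + jm 0 0*jm 0 2*jm 1 3 - jm 0 0*jm 0 2*jm 3 1 - jm 0 0*jm 0 3*jm 1 2 + jm 0 0*jm 0 3*jm 2 1 - jm 0 1*jm 1 1*jm 2 3 + jm 0 1*jm 1 1*jm 3 2 - jm 0 1*jm 1 2*jm 3 1 + jm 0 1*jm 1 3*jm 2 1 - jm 0 2*jm 1 2*jm 2 3 + jm 0 2*jm 1 3*jm 2 2 + jm 0 2*jm 2 1*jm 3 2 - jm 0 2*jm 2 2*jm 3 1 - jm 0 3*jm 1 2*jm 3 3 + jm 0 3*jm 1 3*jm 3 2 + jm 0 3*jm 2 1*jm 3 3 - jm 0 3*jm 2 3*jm 3 1)*(hsF 0 0)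 + (jm 0 0*jm 1 0*jm 2 3 - jm 0 0*jm 1 0*jm 3 2 + jm 0 2*jm 1 0*jm 3 0 + jm 0 2*jm 1 1*jm 1 3 + jm 0 2*jm 1 2*jm 2 3 + jm 0 2*jm 1 3*jm 3 3 - jm 0 3*jm 1 0*jm 2 0 - jm 0 3*jm 1 1*jm 1 2 - jm 0 3*jm 1 2*jm 2 2 - jm 0 3*jm 1 3*jm 3 2 + jm 1 0*jm 1 1*jm 2 3 - jm 1 0*jm 1 1*jm 3 2 + jm 1 1*jm 1 2*jm 3 0 - jm 1 1*jm 1 3*jm 2 0 - jm 1 2*jm 2 0*jm 3 2 + jm 1 2*jm 2 2*jm 3 0 - jm 1 3*jm 2 0*jm 3 3 + jm 1 3*jm 2 3*jm 3 0)*(hsF 1 1) + (-Fp 0 1*jm 1 1*jm 2 3 + Fp 0 1*jm 1 1*jm 3 2 - Fp 0 1*jm 1 2*jm 3 1 + Fp 0 1*jm 1 3*jm 2 1 - Fp 0 2*jm 0 1*jm 0 3 + Fp 0 2*jm 0 1*jm 3 0 - Fp 0 2*jm 2 1*jm 2 3 + Fp 0 2*jm 2 1*jm 3 2 + Fp 0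 3*jm 0 1*jm 0 2 - Fp 0 3*jm 0 1*jm 2 0 - Fp 0 3*jm 2 3*jm 3 1 + Fp 0 3*jm 3 1*jm 3 2 + Fp 1 2*jm 0 1*jm 1 3 + Fp 1 2*jm 0 1*jm 3 1 - Fp 1 2*jm 0 3*jm 1 1 + Fp 1 2*jm 1 1*jm 3 0 - Fp 1 3*jm 0 1*jm 1 2 - Fp 1 3*jm 0 1*jm 2 1 + Fp 1 3*jm 0 2*jm 1 1 - Fp 1 3*jm 1 1*jm 2 0 + Fp 2 3*jm 0 2*jm 2 1 + Fp 2 3*jm 0 3*jm 3 1 - Fp 2 3*jm 2 0*jm 2 1 - Fp 2 3*jm 3 0*jm 3 1)*(hsJ 1 1) + (4*Fp 0 1*jm 0 1*jm 3 2 - 2*Fp 0 1*jm 0 2*jm 1 3 - 2*Fp 0 1*jm 0 2*jm 3 1 + 2*Fp 0 1*jm 0 3*jm 1 2 + 2*Fp 0 1*jm 0 3*jm 2 1 - 2*Fp 0 2*jm 0 1*jm 3 1 - 2*Fp 0 2*jm 0 2*jm 2 3 - 2*Fp 0 2*jm 0 3*jm 3 3 + 2*Fp 0 3*jm 0 1*jm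 2 1 + 2*Fp 0 3*jm 0 2*jm 2 2 + 2*Fp 0 3*jm 0 3*jm 3 2 + 2*Fp 1 2*jm 0 1*jm 0 3 + 2*Fp 1 2*jm 0 1*jm 3 0 - 2*Fp 1 2*jm 0 3*jm 1 0 - 2*Fp 1 2*jm 1 1*jm 3 1 - 2*Fp 1 2*jm 1 2*jm 2 3 - 2*Fp 1 2*jm 1 3*jm 3 3 + 2*Fp 1 2*jm 2 1*jm 2 3 - 2*Fp 1 2*jm 2 1*jm 3 2 - 2*Fp 1 3*jm 0 1*jm 0 2 - 2*Fp 1 3*jm 0 1*jm 2 0 + 2*Fp 1 3*jm 0 2*jm 1 0 + 2*Fp 1 3*jm 1 1*jm 2 1 + 2*Fp 1 3*jm 1 2*jm 2 2 + 2*Fp 1 3*jm 1 3*jm 3 2 + 2*Fp 1 3*jm 2 3*jm 3 1 - 2*Fp 1 3*jm 3 1*jm 3 2 + 4*Fp 2 3 + 2*Fp 2 3*jm 0 2*jm 2 0 + 2*Fp 2 3*jm 0 3*jm 3 0 + 2*Fp 2 3*jm 2 1*jm 2 1 + 2*Fp 2 3*jm 2 2*jm 2 2 + 4*Fp 2 3*jm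 2 3*jm 3 2 + 2*Fp 2 3*jm 3 1*jm 3 1 + 2*Fp 2 3*jm 3 3*jm 3 3)*(hsJ 0 1) + (Fp 0 1*jm 0 2*jm 0 3 - Fp 0 1*jm 0 2*jm 3 0 + Fp 0 1*jm 1 2*jm 1 3 - Fp 0 1*jm 1 2*jm 3 1 - Fp 0 2*jm 1 2*jm 2 3 - Fp 0 2*jm 1 2*jm 3 2 + Fp 0 2*jm 1 3*jm 2 2 - Fp 0 2*jm 2 2*jm 3 1 - 2*Fp 0 3*jm 0 1*jm 0 2 + Fp 0 3*jm 1 3*jm 3 2 - Fp 0 3*jm 3 1*jm 3 2 + Fp 1 2*jm 0 2*jm 2 3 + Fp 1 2*jm 0 2*jm 3 2 - Fp 1 2*jm 0 3*jm 2 2 + Fp 1 2*jm 2 2*jm 3 0 - 2*Fp 1 3*jm 0 1*jm 1 2 - Fp 1 3*jm 0 3*jm 3 2 + Fp 1 3*jm 3 0*jm 3 2 - 2*Fp 2 3*jm 0 1*jm 2 2)*(hsJ 2 2) + (-2*Fp 0 1*jm 0 2*jm 0 3 - 2*Fp 0 1*jm 1 2*jm 1 3 + 2*Fp 0 2*jm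 0 1*jm 0 3 - 2*Fp 0 2*jm 1 2*jm 2 3 - 2*Fp 0 3*jm 1 2*jm 3 3 + 2*Fp 1 2*jm 0 1*jm 1 3 + 2*Fp 1 2*jm 0 2*jm 2 3 + 2*Fp 1 3*jm 0 2*jm 3 3 - 2*Fp 2 3*jm 0 1*jm 3 3)*(hsJ 3 3) + (-Fp 0 1*jm 0 0*jm 2 3 + Fp 0 1*jm 0 0*jm 3 2 - Fp 0 1*jm 0 2*jm 3 0 + Fp 0 1*jm 0 3*jm 2 0 + Fp 0 2*jm 0 0*jm 1 3 - Fp 0 2*jm 0 0*jm 3 1 + Fp 0 2*jm 0 1*jm 3 0 - Fp 0 2*jm 0 3*jm 1 0 - Fp 0 3*jm 0 0*jm 1 2 + Fp 0 3*jm 0 0*jm 2 1 - Fp 0 3*jm 0 1*jm 2 0 + Fp 0 3*jm 0 2*jm 1 0 + Fp 1 2*jm 1 0*jm 1 3 - Fp 1 2*jm 1 0*jm 3 1 + Fp 1 2*jm 2 0*jm 2 3 - Fp 1 2*jm 2 0*jm 3 2 - Fp 1 3*jm 1 0*jm 1 2 + Fp 1 3*jm 1 0*jm 2 1 + Fp 1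 3*jm 2 3*jm 3 0 - Fp 1 3*jm 3 0*jm 3 2 - Fp 2 3*jm 1 2*jm 2 0 - Fp 2 3*jm 1 3*jm 3 0 + Fp 2 3*jm 2 0*jm 2 1 + Fp 2 3*jm 3 0*jm 3 1)*(hsJ 0 0) + (-2*Fp 0 1*jm 0 1*jm 1 2 - 2*Fp 0 1*jm 0 3*jm 2 3 - 2*Fp 0 2*jm 0 2*jm 1 2 + 2*Fp 0 2*jm 0 3*jm 1 3 + 2*Fp 0 3*jm 0 1*jm 2 3 + 2*Fp 0 3*jm 0 1*jm 3 2 - 2*Fp 0 3*jm 0 2*jm 1 3 - 2*Fp 0 3*jm 0 2*jm 3 1 - 4*Fp 0 3*jm 0 3*jm 1 2 + 4*Fp 1 2 - 2*Fp 1 2*jm 0 1*jm 0 1 - 2*Fp 1 2*jm 0 2*jm 0 2 - 4*Fp 1 2*jm 1 2*jm 1 2 + 2*Fp 1 2*jm 1 3*jm 1 3 + 2*Fp 1 2*jm 2 3*jm 2 3 + 2*Fp 1 3*jm 0 2*jm 3 0 - 4*Fp 1 3*jm 1 2*jm 1 3 + 2*Fp 1 3*jm 1 2*jm 3 1 + 2*Fp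 1 3*jm 2 3*jm 3 3 - 2*Fp 2 3*jm 0 1*jm 3 0 - 4*Fp 2 3*jm 1 2*jm 2 3 + 2*Fp 2 3*jm 1 2*jm 3 2 - 2*Fp 2 3*jm 1 3*jm 3 3)*(hsJ 0 3) + (2*Fp 0 1*jm 0 1*jm 1 3 + 2*Fp 0 1*jm 0 2*jm 3 2 + 2*Fp 0 1*jm 0 3*jm 3 3 + 2*Fp 0 2*jm 0 1*jm 2 3 + 2*Fp 0 2*jm 0 1*jm 3 2 - 4*Fp 0 2*jm 0 2*jm 3 1 + 2*Fp 0 2*jm 0 3*jm 1 2 + 2*Fp 0 2*jm 0 3*jm 2 1 - 2*Fp 0 3*jm 0 2*jm 1 2 - 2*Fp 0 3*jm 0 3*jm 3 1 + 2*Fp 1 2*jm 0 2*jm 0 3 + 2*Fp 1 2*jm 0 2*jm 3 0 - 2*Fp 1 2*jm 0 3*jm 2 0 + 2*Fp 1 2*jm 1 2*jm 1 3 - 2*Fp 1 2*jm 1 2*jm 3 1 - 2*Fp 1 2*jm 1 3*jm 2 1 - 2*Fp 1 2*jm 2 2*jm 3 2 - 2*Fp 1 2*jm 2 3*jm 3 3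 - 4*Fp 1 3 + 2*Fp 1 3*jm 0 1*jm 0 1 - 2*Fp 1 3*jm 0 3*jm 3 0 - 2*Fp 1 3*jm 1 2*jm 1 2 - 4*Fp 1 3*jm 1 3*jm 3 1 - 2*Fp 1 3*jm 3 2*jm 3 2 - 2*Fp 1 3*jm 3 3*jm 3 3 - 2*Fp 2 3*jm 0 1*jm 2 0 - 2*Fp 2 3*jm 1 2*jm 2 2 - 2*Fp 2 3*jm 1 3*jm 3 2 - 2*Fp 2 3*jm 2 3*jm 3 1 + 2*Fp 2 3*jm 3 1*jm 3 2)*(hsJ 0 2) + (-jm 0 0*jm 1 3*jm 2 0 + jm 0 0*jm 2 0*jm 3 1 - jm 0 1*jm 1 3*jm 2 1 - jm 0 1*jm 2 0*jm 3 0 - jm 0 1*jm 2 2*jm 2 3 - jm 0 1*jm 2 3*jm 3 3 + jm 0 3*jm 1 0*jm 2 0 + jm 0 3*jm 1 1*jm 2 1 + jm 0 3*jm 2 1*jm 2 2 + jm 0 3*jm 2 3*jm 3 1 + jm 1 0*jm 2 1*jm 3 1 + jm 1 0*jm 2 2*jm 2 3 + jm 1 0*jm 2 3*jm 3 3 - jm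 1 1*jm 2 1*jm 3 0 - jm 1 3*jm 2 0*jm 2 2 - jm 1 3*jm 2 3*jm 3 0 + jm 2 0*jm 2 2*jm 3 1 - jm 2 1*jm 2 2*jm 3 0)*(hsF 2 2) + (jm 0 0*jm 1 2*jm 3 0 - jm 0 0*jm 2 1*jm 3 0 + jm 0 1*jm 1 2*jm 3 1 + jm 0 1*jm 2 0*jm 3 0 + jm 0 1*jm 2 2*jm 3 2 + jm 0 1*jm 3 2*jm 3 3 - jm 0 2*jm 1 0*jm 3 0 - jm 0 2*jm 1 1*jm 3 1 - jm 0 2*jm 2 1*jm 3 2 - jm 0 2*jm 3 1*jm 3 3 - jm 1 0*jm 2 1*jm 3 1 - jm 1 0*jm 2 2*jm 3 2 - jm 1 0*jm 3 2*jm 3 3 + jm 1 1*jm 2 0*jm 3 1 + jm 1 2*jm 2 0*jm 3 2 + jm 1 2*jm 3 0*jm 3 3 + jm 2 0*jm 3 1*jm 3 3 - jm 2 1*jm 3 0*jm 3 3)*(hsF 3 3))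
  have hsw1 : ∀ a b c d, Gf a b c d = - Gf b a c d := by
    intro a b c d
    show Fp a b * jm c d - Fp a c * jm b d + Fp a d * jm b c
      + Fp b c * jm a d - Fp b d * jm a c + Fp c d * jm a b
      = -(Fp b a * jm c d - Fp b c * jm a d + Fp b d * jm a c
      + Fp a c * jm b d - Fp a d * jm b c + Fp c d * jm b a)
    linear_combination jm c d * hsF a b + Fp c d * hsJ a b
  have hsw2 : ∀ a b c d, Gf a b c d = - Gf a c b d := by
    intro a b c d
    show Fp a b * jm c d - Fp a c * jm b d + Fp a d * jm b c
      + Fp b c * jm a d - Fp b d * jm a c + Fp c d * jm a b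
      = -(Fp a c * jm b d - Fp a b * jm c d + Fp a d * jm c b
      + Fp c b * jm a d - Fp c d * jm a b + Fp b d * jm a c)
    linear_combination Fp a d * hsJ b c + jm a d * hsF b c
  have hsw3 : ∀ a b c d, Gf a b c d = - Gf a b d c := by
    intro a b c d
    show Fp a b * jm c d - Fp a c * jm b d + Fp a d * jm b c
      + Fp b c * jm a d - Fp b d * jm a c + Fp c d * jm a b
      = -(Fp a b * jm d c - Fp a d * jm b c + Fp a c * jm b d
      + Fp b d * jm a c - Fp b c * jm a d + Fp d c * jm a b)
    linear_combination Fp a b * hsJ c d + jm a b * hsF c d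
  have hrep1 : ∀ a c d, Gf a a c d = 0 := by
    intro a c d
    exact halfc0 _ (by linear_combination hsw1 a a c d)
  have hrep2 : ∀ a b d, Gf a b b d = 0 := by
    intro a b d
    exact halfc0 _ (by linear_combination hsw2 a b b d)
  have hrep3 : ∀ a b c, Gf a b c c = 0 := by
    intro a b c
    exact halfc0 _ (by linear_combination hsw3 a b c c)
  apply fin4cases <;> apply fin4cases <;> apply fin4cases <;> apply fin4cases
  · linear_combination hrep1 0 0 0
  · linear_combination hrep1 0 0 1
  · linear_combination hrep1 0 0 2
  · linear_combination hrep1 0 0 3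
  · linear_combination hsw3 0 0 1 0 - hrep1 0 0 1
  · linear_combination hrep1 0 1 1
  · linear_combination hrep1 0 1 2
  · linear_combination hrep1 0 1 3
  · linear_combination hsw3 0 0 2 0 - hrep1 0 0 2
  · linear_combination hsw3 0 0 2 1 - hrep1 0 1 2
  · linear_combination hrep1 0 2 2
  · linear_combination hrep1 0 2 3
  · linear_combination hsw3 0 0 3 0 - hrep1 0 0 3
  · linear_combination hsw3 0 0 3 1 - hrep1 0 1 3
  · linear_combination hsw3 0 0 3 2 - hrep1 0 2 3
  · linear_combination hrep1 0 3 3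
  · linear_combination hsw2 0 1 0 0 - hsw3 0 0 1 0 + hrep1 0 0 1
  · linear_combination hsw2 0 1 0 1 - hrep1 0 1 1
  · linear_combination hsw2 0 1 0 2 - hrep1 0 1 2
  · linear_combination hsw2 0 1 0 3 - hrep1 0 1 3
  · linear_combination hsw3 0 1 1 0 - hsw2 0 1 0 1 + hrep1 0 1 1
  · linear_combination hrep2 0 1 1
  · linear_combination hrep2 0 1 2
  · linear_combination hrep2 0 1 3
  · linear_combination hsw3 0 1 2 0 - hsw2 0 1 0 2 + hrep1 0 1 2
  · linear_combination hsw3 0 1 2 1 - hrep2 0 1 2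
  · linear_combination hrep3 0 1 2
  · linear_combination hK
  · linear_combination hsw3 0 1 3 0 - hsw2 0 1 0 3 + hrep1 0 1 3
  · linear_combination hsw3 0 1 3 1 - hrep2 0 1 3
  · linear_combination hsw3 0 1 3 2 - hK
  · linear_combination hrep3 0 1 3
  · linear_combination hsw2 0 2 0 0 - hsw3 0 0 2 0 + hrep1 0 0 2
  · linear_combination hsw2 0 2 0 1 - hsw3 0 0 2 1 + hrep1 0 1 2
  · linear_combination hsw2 0 2 0 2 - hrep1 0 2 2
  · linear_combination hsw2 0 2 0 3 - hrep1 0 2 3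
  · linear_combination hsw2 0 2 1 0 - hsw3 0 1 2 0 + hsw2 0 1 0 2 - hrep1 0 1 2
  · linear_combination hsw2 0 2 1 1 - hsw3 0 1 2 1 + hrep2 0 1 2
  · linear_combination hsw2 0 2 1 2 - hrep3 0 1 2
  · linear_combination hsw2 0 2 1 3 - hK
  · linear_combination hsw3 0 2 2 0 - hsw2 0 2 0 2 + hrep1 0 2 2
  · linear_combination hsw3 0 2 2 1 - hsw2 0 2 1 2 + hrep3 0 1 2
  · linear_combination hrep2 0 2 2
  · linear_combination hrep2 0 2 3
  · linear_combination hsw3 0 2 3 0 - hsw2 0 2 0 3 + hrep1 0 2 3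
  · linear_combination hsw3 0 2 3 1 - hsw2 0 2 1 3 + hK
  · linear_combination hsw3 0 2 3 2 - hrep2 0 2 3
  · linear_combination hrep3 0 2 3
  · linear_combination hsw2 0 3 0 0 - hsw3 0 0 3 0 + hrep1 0 0 3
  · linear_combination hsw2 0 3 0 1 - hsw3 0 0 3 1 + hrep1 0 1 3
  · linear_combination hsw2 0 3 0 2 - hsw3 0 0 3 2 + hrep1 0 2 3
  · linear_combination hsw2 0 3 0 3 - hrep1 0 3 3
  · linear_combination hsw2 0 3 1 0 - hsw3 0 1 3 0 + hsw2 0 1 0 3 - hrep1 0 1 3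
  · linear_combination hsw2 0 3 1 1 - hsw3 0 1 3 1 + hrep2 0 1 3
  · linear_combination hsw2 0 3 1 2 - hsw3 0 1 3 2 + hK
  · linear_combination hsw2 0 3 1 3 - hrep3 0 1 3
  · linear_combination hsw2 0 3 2 0 - hsw3 0 2 3 0 + hsw2 0 2 0 3 - hrep1 0 2 3
  · linear_combination hsw2 0 3 2 1 - hsw3 0 2 3 1 + hsw2 0 2 1 3 - hK
  · linear_combination hsw2 0 3 2 2 - hsw3 0 2 3 2 + hrep2 0 2 3
  · linear_combination hsw2 0 3 2 3 - hrep3 0 2 3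
  · linear_combination hsw3 0 3 3 0 - hsw2 0 3 0 3 + hrep1 0 3 3
  · linear_combination hsw3 0 3 3 1 - hsw2 0 3 1 3 + hrep3 0 1 3
  · linear_combination hsw3 0 3 3 2 - hsw2 0 3 2 3 + hrep3 0 2 3
  · linear_combination hrep2 0 3 3
  · linear_combination hsw1 1 0 0 0 - hsw2 0 1 0 0 + hsw3 0 0 1 0 - hrep1 0 0 1
  · linear_combination hsw1 1 0 0 1 - hsw2 0 1 0 1 + hrep1 0 1 1
  · linear_combination hsw1 1 0 0 2 - hsw2 0 1 0 2 + hrep1 0 1 2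
  · linear_combination hsw1 1 0 0 3 - hsw2 0 1 0 3 + hrep1 0 1 3
  · linear_combination hsw1 1 0 1 0 - hsw3 0 1 1 0 + hsw2 0 1 0 1 - hrep1 0 1 1
  · linear_combination hsw1 1 0 1 1 - hrep2 0 1 1
  · linear_combination hsw1 1 0 1 2 - hrep2 0 1 2
  · linear_combination hsw1 1 0 1 3 - hrep2 0 1 3
  · linear_combination hsw1 1 0 2 0 - hsw3 0 1 2 0 + hsw2 0 1 0 2 - hrep1 0 1 2
  · linear_combination hsw1 1 0 2 1 - hsw3 0 1 2 1 + hrep2 0 1 2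
  · linear_combination hsw1 1 0 2 2 - hrep3 0 1 2
  · linear_combination hsw1 1 0 2 3 - hK
  · linear_combination hsw1 1 0 3 0 - hsw3 0 1 3 0 + hsw2 0 1 0 3 - hrep1 0 1 3
  · linear_combination hsw1 1 0 3 1 - hsw3 0 1 3 1 + hrep2 0 1 3
  · linear_combination hsw1 1 0 3 2 - hsw3 0 1 3 2 + hK
  · linear_combination hsw1 1 0 3 3 - hrep3 0 1 3
  · linear_combination hsw2 1 1 0 0 - hsw3 1 0 1 0 + hsw1 1 0 0 1 - hsw2 0 1 0 1 + hrep1 0 1 1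
  · linear_combination hsw2 1 1 0 1 - hsw1 1 0 1 1 + hrep2 0 1 1
  · linear_combination hsw2 1 1 0 2 - hsw1 1 0 1 2 + hrep2 0 1 2
  · linear_combination hsw2 1 1 0 3 - hsw1 1 0 1 3 + hrep2 0 1 3
  · linear_combination hsw3 1 1 1 0 - hsw2 1 1 0 1 + hsw1 1 0 1 1 - hrep2 0 1 1
  · linear_combination hrep1 1 1 1
  · linear_combination hrep1 1 1 2
  · linear_combination hrep1 1 1 3
  · linear_combination hsw3 1 1 2 0 - hsw2 1 1 0 2 + hsw1 1 0 1 2 - hrep2 0 1 2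
  · linear_combination hsw3 1 1 2 1 - hrep1 1 1 2
  · linear_combination hrep1 1 2 2
  · linear_combination hrep1 1 2 3
  · linear_combination hsw3 1 1 3 0 - hsw2 1 1 0 3 + hsw1 1 0 1 3 - hrep2 0 1 3
  · linear_combination hsw3 1 1 3 1 - hrep1 1 1 3
  · linear_combination hsw3 1 1 3 2 - hrep1 1 2 3
  · linear_combination hrep1 1 3 3
  · linear_combination hsw2 1 2 0 0 - hsw3 1 0 2 0 + hsw1 1 0 0 2 - hsw2 0 1 0 2 + hrep1 0 1 2
  · linear_combination hsw2 1 2 0 1 - hsw3 1 0 2 1 + hsw1 1 0 1 2 - hrep2 0 1 2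
  · linear_combination hsw2 1 2 0 2 - hsw1 1 0 2 2 + hrep3 0 1 2
  · linear_combination hsw2 1 2 0 3 - hsw1 1 0 2 3 + hK
  · linear_combination hsw2 1 2 1 0 - hsw3 1 1 2 0 + hsw2 1 1 0 2 - hsw1 1 0 1 2 + hrep2 0 1 2
  · linear_combination hsw2 1 2 1 1 - hsw3 1 1 2 1 + hrep1 1 1 2
  · linear_combination hsw2 1 2 1 2 - hrep1 1 2 2
  · linear_combination hsw2 1 2 1 3 - hrep1 1 2 3
  · linear_combination hsw3 1 2 2 0 - hsw2 1 2 0 2 + hsw1 1 0 2 2 - hrep3 0 1 2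
  · linear_combination hsw3 1 2 2 1 - hsw2 1 2 1 2 + hrep1 1 2 2
  · linear_combination hrep2 1 2 2
  · linear_combination hrep2 1 2 3
  · linear_combination hsw3 1 2 3 0 - hsw2 1 2 0 3 + hsw1 1 0 2 3 - hK
  · linear_combination hsw3 1 2 3 1 - hsw2 1 2 1 3 + hrep1 1 2 3
  · linear_combination hsw3 1 2 3 2 - hrep2 1 2 3
  · linear_combination hrep3 1 2 3
  · linear_combination hsw2 1 3 0 0 - hsw3 1 0 3 0 + hsw1 1 0 0 3 - hsw2 0 1 0 3 + hrep1 0 1 3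
  · linear_combination hsw2 1 3 0 1 - hsw3 1 0 3 1 + hsw1 1 0 1 3 - hrep2 0 1 3
  · linear_combination hsw2 1 3 0 2 - hsw3 1 0 3 2 + hsw1 1 0 2 3 - hK
  · linear_combination hsw2 1 3 0 3 - hsw1 1 0 3 3 + hrep3 0 1 3
  · linear_combination hsw2 1 3 1 0 - hsw3 1 1 3 0 + hsw2 1 1 0 3 - hsw1 1 0 1 3 + hrep2 0 1 3
  · linear_combination hsw2 1 3 1 1 - hsw3 1 1 3 1 + hrep1 1 1 3
  · linear_combination hsw2 1 3 1 2 - hsw3 1 1 3 2 + hrep1 1 2 3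
  · linear_combination hsw2 1 3 1 3 - hrep1 1 3 3
  · linear_combination hsw2 1 3 2 0 - hsw3 1 2 3 0 + hsw2 1 2 0 3 - hsw1 1 0 2 3 + hK
  · linear_combination hsw2 1 3 2 1 - hsw3 1 2 3 1 + hsw2 1 2 1 3 - hrep1 1 2 3
  · linear_combination hsw2 1 3 2 2 - hsw3 1 2 3 2 + hrep2 1 2 3
  · linear_combination hsw2 1 3 2 3 - hrep3 1 2 3
  · linear_combination hsw3 1 3 3 0 - hsw2 1 3 0 3 + hsw1 1 0 3 3 - hrep3 0 1 3
  · linear_combination hsw3 1 3 3 1 - hsw2 1 3 1 3 + hrep1 1 3 3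
  · linear_combination hsw3 1 3 3 2 - hsw2 1 3 2 3 + hrep3 1 2 3
  · linear_combination hrep2 1 3 3
  · linear_combination hsw1 2 0 0 0 - hsw2 0 2 0 0 + hsw3 0 0 2 0 - hrep1 0 0 2
  · linear_combination hsw1 2 0 0 1 - hsw2 0 2 0 1 + hsw3 0 0 2 1 - hrep1 0 1 2
  · linear_combination hsw1 2 0 0 2 - hsw2 0 2 0 2 + hrep1 0 2 2
  · linear_combination hsw1 2 0 0 3 - hsw2 0 2 0 3 + hrep1 0 2 3
  · linear_combination hsw1 2 0 1 0 - hsw2 0 2 1 0 + hsw3 0 1 2 0 - hsw2 0 1 0 2 + hrep1 0 1 2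
  · linear_combination hsw1 2 0 1 1 - hsw2 0 2 1 1 + hsw3 0 1 2 1 - hrep2 0 1 2
  · linear_combination hsw1 2 0 1 2 - hsw2 0 2 1 2 + hrep3 0 1 2
  · linear_combination hsw1 2 0 1 3 - hsw2 0 2 1 3 + hK
  · linear_combination hsw1 2 0 2 0 - hsw3 0 2 2 0 + hsw2 0 2 0 2 - hrep1 0 2 2
  · linear_combination hsw1 2 0 2 1 - hsw3 0 2 2 1 + hsw2 0 2 1 2 - hrep3 0 1 2
  · linear_combination hsw1 2 0 2 2 - hrep2 0 2 2
  · linear_combination hsw1 2 0 2 3 - hrep2 0 2 3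
  · linear_combination hsw1 2 0 3 0 - hsw3 0 2 3 0 + hsw2 0 2 0 3 - hrep1 0 2 3
  · linear_combination hsw1 2 0 3 1 - hsw3 0 2 3 1 + hsw2 0 2 1 3 - hK
  · linear_combination hsw1 2 0 3 2 - hsw3 0 2 3 2 + hrep2 0 2 3
  · linear_combination hsw1 2 0 3 3 - hrep3 0 2 3
  · linear_combination hsw1 2 1 0 0 - hsw2 1 2 0 0 + hsw3 1 0 2 0 - hsw1 1 0 0 2 + hsw2 0 1 0 2 - hrep1 0 1 2
  · linear_combination hsw1 2 1 0 1 - hsw2 1 2 0 1 + hsw3 1 0 2 1 - hsw1 1 0 1 2 + hrep2 0 1 2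
  · linear_combination hsw1 2 1 0 2 - hsw2 1 2 0 2 + hsw1 1 0 2 2 - hrep3 0 1 2
  · linear_combination hsw1 2 1 0 3 - hsw2 1 2 0 3 + hsw1 1 0 2 3 - hK
  · linear_combination hsw1 2 1 1 0 - hsw2 1 2 1 0 + hsw3 1 1 2 0 - hsw2 1 1 0 2 + hsw1 1 0 1 2 - hrep2 0 1 2
  · linear_combination hsw1 2 1 1 1 - hsw2 1 2 1 1 + hsw3 1 1 2 1 - hrep1 1 1 2
  · linear_combination hsw1 2 1 1 2 - hsw2 1 2 1 2 + hrep1 1 2 2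
  · linear_combination hsw1 2 1 1 3 - hsw2 1 2 1 3 + hrep1 1 2 3
  · linear_combination hsw1 2 1 2 0 - hsw3 1 2 2 0 + hsw2 1 2 0 2 - hsw1 1 0 2 2 + hrep3 0 1 2
  · linear_combination hsw1 2 1 2 1 - hsw3 1 2 2 1 + hsw2 1 2 1 2 - hrep1 1 2 2
  · linear_combination hsw1 2 1 2 2 - hrep2 1 2 2
  · linear_combination hsw1 2 1 2 3 - hrep2 1 2 3
  · linear_combination hsw1 2 1 3 0 - hsw3 1 2 3 0 + hsw2 1 2 0 3 - hsw1 1 0 2 3 + hK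
  · linear_combination hsw1 2 1 3 1 - hsw3 1 2 3 1 + hsw2 1 2 1 3 - hrep1 1 2 3
  · linear_combination hsw1 2 1 3 2 - hsw3 1 2 3 2 + hrep2 1 2 3
  · linear_combination hsw1 2 1 3 3 - hrep3 1 2 3
  · linear_combination hsw2 2 2 0 0 - hsw3 2 0 2 0 + hsw1 2 0 0 2 - hsw2 0 2 0 2 + hrep1 0 2 2
  · linear_combination hsw2 2 2 0 1 - hsw3 2 0 2 1 + hsw1 2 0 1 2 - hsw2 0 2 1 2 + hrep3 0 1 2
  · linear_combination hsw2 2 2 0 2 - hsw1 2 0 2 2 + hrep2 0 2 2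
  · linear_combination hsw2 2 2 0 3 - hsw1 2 0 2 3 + hrep2 0 2 3
  · linear_combination hsw2 2 2 1 0 - hsw3 2 1 2 0 + hsw1 2 1 0 2 - hsw2 1 2 0 2 + hsw1 1 0 2 2 - hrep3 0 1 2
  · linear_combination hsw2 2 2 1 1 - hsw3 2 1 2 1 + hsw1 2 1 1 2 - hsw2 1 2 1 2 + hrep1 1 2 2
  · linear_combination hsw2 2 2 1 2 - hsw1 2 1 2 2 + hrep2 1 2 2
  · linear_combination hsw2 2 2 1 3 - hsw1 2 1 2 3 + hrep2 1 2 3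
  · linear_combination hsw3 2 2 2 0 - hsw2 2 2 0 2 + hsw1 2 0 2 2 - hrep2 0 2 2
  · linear_combination hsw3 2 2 2 1 - hsw2 2 2 1 2 + hsw1 2 1 2 2 - hrep2 1 2 2
  · linear_combination hrep1 2 2 2
  · linear_combination hrep1 2 2 3
  · linear_combination hsw3 2 2 3 0 - hsw2 2 2 0 3 + hsw1 2 0 2 3 - hrep2 0 2 3
  · linear_combination hsw3 2 2 3 1 - hsw2 2 2 1 3 + hsw1 2 1 2 3 - hrep2 1 2 3
  · linear_combination hsw3 2 2 3 2 - hrep1 2 2 3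
  · linear_combination hrep1 2 3 3
  · linear_combination hsw2 2 3 0 0 - hsw3 2 0 3 0 + hsw1 2 0 0 3 - hsw2 0 2 0 3 + hrep1 0 2 3
  · linear_combination hsw2 2 3 0 1 - hsw3 2 0 3 1 + hsw1 2 0 1 3 - hsw2 0 2 1 3 + hK
  · linear_combination hsw2 2 3 0 2 - hsw3 2 0 3 2 + hsw1 2 0 2 3 - hrep2 0 2 3
  · linear_combination hsw2 2 3 0 3 - hsw1 2 0 3 3 + hrep3 0 2 3
  · linear_combination hsw2 2 3 1 0 - hsw3 2 1 3 0 + hsw1 2 1 0 3 - hsw2 1 2 0 3 + hsw1 1 0 2 3 - hK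
  · linear_combination hsw2 2 3 1 1 - hsw3 2 1 3 1 + hsw1 2 1 1 3 - hsw2 1 2 1 3 + hrep1 1 2 3
  · linear_combination hsw2 2 3 1 2 - hsw3 2 1 3 2 + hsw1 2 1 2 3 - hrep2 1 2 3
  · linear_combination hsw2 2 3 1 3 - hsw1 2 1 3 3 + hrep3 1 2 3
  · linear_combination hsw2 2 3 2 0 - hsw3 2 2 3 0 + hsw2 2 2 0 3 - hsw1 2 0 2 3 + hrep2 0 2 3
  · linear_combination hsw2 2 3 2 1 - hsw3 2 2 3 1 + hsw2 2 2 1 3 - hsw1 2 1 2 3 + hrep2 1 2 3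
  · linear_combination hsw2 2 3 2 2 - hsw3 2 2 3 2 + hrep1 2 2 3
  · linear_combination hsw2 2 3 2 3 - hrep1 2 3 3
  · linear_combination hsw3 2 3 3 0 - hsw2 2 3 0 3 + hsw1 2 0 3 3 - hrep3 0 2 3
  · linear_combination hsw3 2 3 3 1 - hsw2 2 3 1 3 + hsw1 2 1 3 3 - hrep3 1 2 3
  · linear_combination hsw3 2 3 3 2 - hsw2 2 3 2 3 + hrep1 2 3 3
  · linear_combination hrep2 2 3 3
  · linear_combination hsw1 3 0 0 0 - hsw2 0 3 0 0 + hsw3 0 0 3 0 - hrep1 0 0 3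
  · linear_combination hsw1 3 0 0 1 - hsw2 0 3 0 1 + hsw3 0 0 3 1 - hrep1 0 1 3
  · linear_combination hsw1 3 0 0 2 - hsw2 0 3 0 2 + hsw3 0 0 3 2 - hrep1 0 2 3
  · linear_combination hsw1 3 0 0 3 - hsw2 0 3 0 3 + hrep1 0 3 3
  · linear_combination hsw1 3 0 1 0 - hsw2 0 3 1 0 + hsw3 0 1 3 0 - hsw2 0 1 0 3 + hrep1 0 1 3
  · linear_combination hsw1 3 0 1 1 - hsw2 0 3 1 1 + hsw3 0 1 3 1 - hrep2 0 1 3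
  · linear_combination hsw1 3 0 1 2 - hsw2 0 3 1 2 + hsw3 0 1 3 2 - hK
  · linear_combination hsw1 3 0 1 3 - hsw2 0 3 1 3 + hrep3 0 1 3
  · linear_combination hsw1 3 0 2 0 - hsw2 0 3 2 0 + hsw3 0 2 3 0 - hsw2 0 2 0 3 + hrep1 0 2 3
  · linear_combination hsw1 3 0 2 1 - hsw2 0 3 2 1 + hsw3 0 2 3 1 - hsw2 0 2 1 3 + hK
  · linear_combination hsw1 3 0 2 2 - hsw2 0 3 2 2 + hsw3 0 2 3 2 - hrep2 0 2 3
  · linear_combination hsw1 3 0 2 3 - hsw2 0 3 2 3 + hrep3 0 2 3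
  · linear_combination hsw1 3 0 3 0 - hsw3 0 3 3 0 + hsw2 0 3 0 3 - hrep1 0 3 3
  · linear_combination hsw1 3 0 3 1 - hsw3 0 3 3 1 + hsw2 0 3 1 3 - hrep3 0 1 3
  · linear_combination hsw1 3 0 3 2 - hsw3 0 3 3 2 + hsw2 0 3 2 3 - hrep3 0 2 3
  · linear_combination hsw1 3 0 3 3 - hrep2 0 3 3
  · linear_combination hsw1 3 1 0 0 - hsw2 1 3 0 0 + hsw3 1 0 3 0 - hsw1 1 0 0 3 + hsw2 0 1 0 3 - hrep1 0 1 3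
  · linear_combination hsw1 3 1 0 1 - hsw2 1 3 0 1 + hsw3 1 0 3 1 - hsw1 1 0 1 3 + hrep2 0 1 3
  · linear_combination hsw1 3 1 0 2 - hsw2 1 3 0 2 + hsw3 1 0 3 2 - hsw1 1 0 2 3 + hK
  · linear_combination hsw1 3 1 0 3 - hsw2 1 3 0 3 + hsw1 1 0 3 3 - hrep3 0 1 3
  · linear_combination hsw1 3 1 1 0 - hsw2 1 3 1 0 + hsw3 1 1 3 0 - hsw2 1 1 0 3 + hsw1 1 0 1 3 - hrep2 0 1 3
  · linear_combination hsw1 3 1 1 1 - hsw2 1 3 1 1 + hsw3 1 1 3 1 - hrep1 1 1 3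
  · linear_combination hsw1 3 1 1 2 - hsw2 1 3 1 2 + hsw3 1 1 3 2 - hrep1 1 2 3
  · linear_combination hsw1 3 1 1 3 - hsw2 1 3 1 3 + hrep1 1 3 3
  · linear_combination hsw1 3 1 2 0 - hsw2 1 3 2 0 + hsw3 1 2 3 0 - hsw2 1 2 0 3 + hsw1 1 0 2 3 - hK
  · linear_combination hsw1 3 1 2 1 - hsw2 1 3 2 1 + hsw3 1 2 3 1 - hsw2 1 2 1 3 + hrep1 1 2 3
  · linear_combination hsw1 3 1 2 2 - hsw2 1 3 2 2 + hsw3 1 2 3 2 - hrep2 1 2 3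
  · linear_combination hsw1 3 1 2 3 - hsw2 1 3 2 3 + hrep3 1 2 3
  · linear_combination hsw1 3 1 3 0 - hsw3 1 3 3 0 + hsw2 1 3 0 3 - hsw1 1 0 3 3 + hrep3 0 1 3
  · linear_combination hsw1 3 1 3 1 - hsw3 1 3 3 1 + hsw2 1 3 1 3 - hrep1 1 3 3
  · linear_combination hsw1 3 1 3 2 - hsw3 1 3 3 2 + hsw2 1 3 2 3 - hrep3 1 2 3
  · linear_combination hsw1 3 1 3 3 - hrep2 1 3 3
  · linear_combination hsw1 3 2 0 0 - hsw2 2 3 0 0 + hsw3 2 0 3 0 - hsw1 2 0 0 3 + hsw2 0 2 0 3 - hrep1 0 2 3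
  · linear_combination hsw1 3 2 0 1 - hsw2 2 3 0 1 + hsw3 2 0 3 1 - hsw1 2 0 1 3 + hsw2 0 2 1 3 - hK
  · linear_combination hsw1 3 2 0 2 - hsw2 2 3 0 2 + hsw3 2 0 3 2 - hsw1 2 0 2 3 + hrep2 0 2 3
  · linear_combination hsw1 3 2 0 3 - hsw2 2 3 0 3 + hsw1 2 0 3 3 - hrep3 0 2 3
  · linear_combination hsw1 3 2 1 0 - hsw2 2 3 1 0 + hsw3 2 1 3 0 - hsw1 2 1 0 3 + hsw2 1 2 0 3 - hsw1 1 0 2 3 + hK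
  · linear_combination hsw1 3 2 1 1 - hsw2 2 3 1 1 + hsw3 2 1 3 1 - hsw1 2 1 1 3 + hsw2 1 2 1 3 - hrep1 1 2 3
  · linear_combination hsw1 3 2 1 2 - hsw2 2 3 1 2 + hsw3 2 1 3 2 - hsw1 2 1 2 3 + hrep2 1 2 3
  · linear_combination hsw1 3 2 1 3 - hsw2 2 3 1 3 + hsw1 2 1 3 3 - hrep3 1 2 3
  · linear_combination hsw1 3 2 2 0 - hsw2 2 3 2 0 + hsw3 2 2 3 0 - hsw2 2 2 0 3 + hsw1 2 0 2 3 - hrep2 0 2 3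
  · linear_combination hsw1 3 2 2 1 - hsw2 2 3 2 1 + hsw3 2 2 3 1 - hsw2 2 2 1 3 + hsw1 2 1 2 3 - hrep2 1 2 3
  · linear_combination hsw1 3 2 2 2 - hsw2 2 3 2 2 + hsw3 2 2 3 2 - hrep1 2 2 3
  · linear_combination hsw1 3 2 2 3 - hsw2 2 3 2 3 + hrep1 2 3 3
  · linear_combination hsw1 3 2 3 0 - hsw3 2 3 3 0 + hsw2 2 3 0 3 - hsw1 2 0 3 3 + hrep3 0 2 3
  · linear_combination hsw1 3 2 3 1 - hsw3 2 3 3 1 + hsw2 2 3 1 3 - hsw1 2 1 3 3 + hrep3 1 2 3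
  · linear_combination hsw1 3 2 3 2 - hsw3 2 3 3 2 + hsw2 2 3 2 3 - hrep1 2 3 3
  · linear_combination hsw1 3 2 3 3 - hrep2 2 3 3
  · linear_combination hsw2 3 3 0 0 - hsw3 3 0 3 0 + hsw1 3 0 0 3 - hsw2 0 3 0 3 + hrep1 0 3 3
  · linear_combination hsw2 3 3 0 1 - hsw3 3 0 3 1 + hsw1 3 0 1 3 - hsw2 0 3 1 3 + hrep3 0 1 3
  · linear_combination hsw2 3 3 0 2 - hsw3 3 0 3 2 + hsw1 3 0 2 3 - hsw2 0 3 2 3 + hrep3 0 2 3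
  · linear_combination hsw2 3 3 0 3 - hsw1 3 0 3 3 + hrep2 0 3 3
  · linear_combination hsw2 3 3 1 0 - hsw3 3 1 3 0 + hsw1 3 1 0 3 - hsw2 1 3 0 3 + hsw1 1 0 3 3 - hrep3 0 1 3
  · linear_combination hsw2 3 3 1 1 - hsw3 3 1 3 1 + hsw1 3 1 1 3 - hsw2 1 3 1 3 + hrep1 1 3 3
  · linear_combination hsw2 3 3 1 2 - hsw3 3 1 3 2 + hsw1 3 1 2 3 - hsw2 1 3 2 3 + hrep3 1 2 3
  · linear_combination hsw2 3 3 1 3 - hsw1 3 1 3 3 + hrep2 1 3 3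
  · linear_combination hsw2 3 3 2 0 - hsw3 3 2 3 0 + hsw1 3 2 0 3 - hsw2 2 3 0 3 + hsw1 2 0 3 3 - hrep3 0 2 3
  · linear_combination hsw2 3 3 2 1 - hsw3 3 2 3 1 + hsw1 3 2 1 3 - hsw2 2 3 1 3 + hsw1 2 1 3 3 - hrep3 1 2 3
  · linear_combination hsw2 3 3 2 2 - hsw3 3 2 3 2 + hsw1 3 2 2 3 - hsw2 2 3 2 3 + hrep1 2 3 3
  · linear_combination hsw2 3 3 2 3 - hsw1 3 2 3 3 + hrep2 2 3 3
  · linear_combination hsw3 3 3 3 0 - hsw2 3 3 0 3 + hsw1 3 0 3 3 - hrep2 0 3 3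
  · linear_combination hsw3 3 3 3 1 - hsw2 3 3 1 3 + hsw1 3 1 3 3 - hrep2 1 3 3
  · linear_combination hsw3 3 3 3 2 - hsw2 3 3 2 3 + hsw1 3 2 3 3 - hrep2 2 3 3
  · linear_combination hrep1 3 3 3
/-- An algebraic model of a Riemannian manifold: `C` is the (commutative `ℝ`-algebra of)
smooth functions, `V` the `C`-module of vector fields, `act` the directional derivative
of functions, `bra` the Lie bracket, `g` the Riemannian metric and `nab` its Levi-Civita
connection (torsion-free and metric). -/
structure RiemPkg (C V : Type*) [CommRing C] [Algebra ℝ C]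
    [AddCommGroup V] [Module C V] where
  act : V → C → C
  bra : V → V → V
  g : V → V → C
  nab : V → V → V
  g_symm : ∀ X Y, g X Y = g Y X
  g_addl : ∀ X Y Z, g (X + Y) Z = g X Z + g Y Z
  g_smull : ∀ (f : C) (X Y), g (f • X) Y = f * g X Y
  bra_antisymm : ∀ X Y, bra X Y = -bra Y X
  act_add : ∀ X (f h : C), act X (f + h) = act X f + act X h
  act_mul : ∀ X (f h : C), act X (f * h) = act X f * h + f * act X h
  nab_addl : ∀ X Y Z, nab (X + Y) Z = nab X Z + nab Y Z
  nab_smull : ∀ (f : C) (X Y), nab (f • X) Y = f • nab X Y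
  nab_addr : ∀ X Y Z, nab X (Y + Z) = nab X Y + nab X Z
  nab_leibniz : ∀ X (f : C) (Y), nab X (f • Y) = act X f • Y + f • nab X Y
  torsion_free : ∀ X Y, nab X Y - nab Y X = bra X Y
  metric_compat : ∀ X Y Z, act X (g Y Z) = g (nab X Y) Z + g Y (nab X Z)

/-- Let `(M,g,J)` be a Riemannian 4-manifold with Hermitian structure `J`
(integrable, orthogonal), oriented by `J`.  `W` models the sections of `Λ²TM`, with
wedge product `wedge`, induced metric
`gW(v₁∧v₂, v₃∧v₄) = (1/2)(g(v₁,v₃)g(v₂,v₄) - g(v₁,v₄)g(v₂,v₃))`, and induced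
(Levi-Civita) connection `nabW`.  Let `𝔍` be the section of `Λ²₊TM` with
`g(𝔍, X∧Y) = (1/2)g(JX,Y)`, and let `B` be the vector field dual to the Lee form
`θ = -δΩ∘J`.  Then `∇_X 𝔍 = (1/2)(JX ∧ B + X ∧ JB)`. -/
theorem stmt13
    {C V W : Type*} [CommRing C] [Algebra ℝ C] [AddCommGroup V] [Module C V]
    [AddCommGroup W] [Module C W] [Module ℝ W] [IsScalarTower ℝ C W]
    (P : RiemPkg C V)
    (E : Fin 4 → V)
    (hON : ∀ i j, P.g (E i) (E j) = if i = j then 1 else 0)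
    (hframe : ∀ X : V, ∑ i, P.g X (E i) • E i = X)
    (J : V → V)
    (hJ_add : ∀ X Y, J (X + Y) = J X + J Y)
    (hJ_smul : ∀ (f : C) (X), J (f • X) = f • J X)
    (hJJ : ∀ X, J (J X) = -X)
    (hJg : ∀ X Y, P.g (J X) (J Y) = P.g X Y)
    (nabJ : V → V → V)
    (hnabJ : ∀ X Y, nabJ X Y = P.nab X (J Y) - J (P.nab X Y))
    (hint : ∀ X Y, nabJ X Y = nabJ (J X) (J Y))   -- integrability of `J`
    -- the Lee form `θ = -δΩ∘J` and its dual vector field `B`: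
    (θ : V → C)
    (hθ : ∀ X, θ X = ∑ i, P.g (nabJ (E i) (E i)) (J X))
    (B : V) (hB : ∀ X, P.g B X = θ X)
    -- the bundle `Λ²TM`: wedge product, induced metric and induced connection
    (wedge : V → V → W)
    (hw_addl : ∀ X Y Z, wedge (X + Y) Z = wedge X Z + wedge Y Z)
    (hw_addr : ∀ X Y Z, wedge X (Y + Z) = wedge X Y + wedge X Z)
    (hw_smull : ∀ (f : C) (X Y), wedge (f • X) Y = f • wedge X Y)
    (hw_smulr : ∀ (f : C) (X Y), wedge X (f • Y) = f • wedge X Y)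
    (hw_alt : ∀ X, wedge X X = 0)
    (gW : W → W → C)
    (hgW_symm : ∀ a b, gW a b = gW b a)
    (hgW_addl : ∀ a b c, gW (a + b) c = gW a c + gW b c)
    (hgW_smull : ∀ (f : C) (a b), gW (f • a) b = f * gW a b)
    (hgW : ∀ v₁ v₂ v₃ v₄, gW (wedge v₁ v₂) (wedge v₃ v₄)
      = (1/2 : ℝ) • (P.g v₁ v₃ * P.g v₂ v₄ - P.g v₁ v₄ * P.g v₂ v₃))
    (hgW_nondeg : ∀ a : W, (∀ Y Z, gW a (wedge Y Z) = 0) → a = 0)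
    (nabW : V → W → W)
    (hnabW_addr : ∀ X a b, nabW X (a + b) = nabW X a + nabW X b)
    (hnabW_leibniz : ∀ X (f : C) a, nabW X (f • a) = P.act X f • a + f • nabW X a)
    (hnabW_wedge : ∀ X Y Z,
      nabW X (wedge Y Z) = wedge (P.nab X Y) Z + wedge Y (P.nab X Z))
    (hnabW_metric : ∀ X a b,
      P.act X (gW a b) = gW (nabW X a) b + gW a (nabW X b))
    -- the twistor section `𝔍` corresponding to `J`:
    (𝔍 : W)
    (h𝔍 : ∀ X Y, gW 𝔍 (wedge X Y) = (1/2 : ℝ) • P.g (J X) Y) :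
    ∀ X : V, nabW X 𝔍 = (1/2 : ℝ) • (wedge (J X) B + wedge X (J B)) := by
  -- ===== scalar helpers =====
  have act0 : ∀ X : V, P.act X 0 = 0 := by
    intro X
    have h := P.act_add X 0 0
    rw [add_zero] at h
    linear_combination (-1 : C) * h
  have act1 : ∀ X : V, P.act X 1 = 0 := by
    intro X
    have h := P.act_mul X 1 1
    rw [mul_one] at h
    linear_combination (-1 : C) * h
  set hf : C := (1/2 : ℝ) • (1 : C) with hfdef
  have hf2 : hf + hf = 1 := by
    rw [hfdef, ← add_smul]; norm_num
  have hsmC : ∀ x : C, (1/2 : ℝ) • x = hf * x := by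
    intro x
    rw [hfdef, smul_mul_assoc, one_mul]
  have acthf : ∀ X : V, P.act X hf = 0 := by
    intro X
    apply halfc0
    have h := P.act_add X hf hf
    rw [hf2, act1] at h
    linear_combination (-1 : C) * h
  have actsm : ∀ (X : V) (f : C), P.act X (hf * f) = hf * P.act X f := by
    intro X f
    rw [P.act_mul, acthf]; ring
  -- ===== g helpers =====
  have gaddr : ∀ X Y Z : V, P.g X (Y + Z) = P.g X Y + P.g X Z := by
    intro X Y Z
    rw [P.g_symm, P.g_addl, P.g_symm Y, P.g_symm Z]
  have gsmulr : ∀ (f : C) (X Y : V), P.g X (f • Y) = f * P.g X Y := by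
    intro f X Y
    rw [P.g_symm, P.g_smull, P.g_symm]
  have gnegl : ∀ X Y : V, P.g (-X) Y = - P.g X Y := by
    intro X Y
    rw [show (-X) = (-1 : C) • X from (neg_one_smul C X).symm, P.g_smull]; ring
  have gnegr : ∀ X Y : V, P.g X (-Y) = - P.g X Y := by
    intro X Y
    rw [P.g_symm, gnegl, P.g_symm]
  have gsubl : ∀ X Y Z : V, P.g (X - Y) Z = P.g X Z - P.g Y Z := by
    intro X Y Z
    rw [sub_eq_add_neg, P.g_addl, gnegl, sub_eq_add_neg]
  -- additive maps over frame sums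
  have sumC : ∀ (T : V → C), (∀ u v, T (u + v) = T u + T v) →
      ∀ f : Fin 4 → V, T (∑ i, f i) = ∑ i, T (f i) := by
    intro T hadd f
    exact map_sum (AddMonoidHom.mk' T hadd) f Finset.univ
  have sumV : ∀ (T : V → V), (∀ u v, T (u + v) = T u + T v) →
      ∀ f : Fin 4 → V, T (∑ i, f i) = ∑ i, T (f i) := by
    intro T hadd f
    exact map_sum (AddMonoidHom.mk' T hadd) f Finset.univ
  have gsuml : ∀ (f : Fin 4 → C) (v : Fin 4 → V) (Y : V),
      P.g (∑ i, f i • v i) Y = ∑ i, f i * P.g (v i) Y := by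
    intro f v Y
    rw [sumC (fun X => P.g X Y) (fun a b => P.g_addl a b Y) (fun i => f i • v i)]
    exact Finset.sum_congr rfl fun i _ => P.g_smull _ _ _
  have gsumr : ∀ (f : Fin 4 → C) (v : Fin 4 → V) (Y : V),
      P.g Y (∑ i, f i • v i) = ∑ i, f i * P.g Y (v i) := by
    intro f v Y
    rw [P.g_symm, gsuml]
    exact Finset.sum_congr rfl fun i _ => by rw [P.g_symm]
  -- ===== J helpers =====
  have Jneg : ∀ X : V, J (-X) = - J X := by
    intro X
    rw [show (-X) = (-1 : C) • X from (neg_one_smul C X).symm, hJ_smul, neg_one_smul]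
  have Jsum : ∀ (f : Fin 4 → C) (v : Fin 4 → V),
      J (∑ i, f i • v i) = ∑ i, f i • J (v i) := by
    intro f v
    rw [sumV J hJ_add (fun i => f i • v i)]
    exact Finset.sum_congr rfl fun i _ => hJ_smul _ _
  have gJswap : ∀ X Y : V, P.g (J X) Y = - P.g X (J Y) := by
    intro X Y
    have h := hJg X (J Y)
    rw [hJJ, gnegr] at h
    linear_combination (-1 : C) * h
  -- ===== nab helpers =====
  have actm1 : ∀ X : V, P.act X (-1 : C) = 0 := by
    intro X
    have h := P.act_add X 1 (-1)
    rw [add_neg_cancel, act0, act1] at h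
    linear_combination (-1 : C) * h
  have nabnegr : ∀ X Y : V, P.nab X (-Y) = - P.nab X Y := by
    intro X Y
    rw [show (-Y) = (-1 : C) • Y from (neg_one_smul C Y).symm, P.nab_leibniz, actm1,
      zero_smul, zero_add, neg_one_smul]
  have nabsubr : ∀ X Y Z : V, P.nab X (Y - Z) = P.nab X Y - P.nab X Z := by
    intro X Y Z
    rw [sub_eq_add_neg, P.nab_addr, nabnegr, sub_eq_add_neg]
  -- ===== nabJ (∇J) helpers =====
  have Naddl : ∀ X X' Y : V, nabJ (X + X') Y = nabJ X Y + nabJ X' Y := by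
    intro X X' Y
    rw [hnabJ, hnabJ, hnabJ, P.nab_addl, P.nab_addl, hJ_add]
    abel
  have Nsmull : ∀ (f : C) (X Y : V), nabJ (f • X) Y = f • nabJ X Y := by
    intro f X Y
    rw [hnabJ, hnabJ, P.nab_smull, P.nab_smull, hJ_smul, smul_sub]
  have Naddr : ∀ X Y Y' : V, nabJ X (Y + Y') = nabJ X Y + nabJ X Y' := by
    intro X Y Y'
    rw [hnabJ, hnabJ, hnabJ, hJ_add, P.nab_addr, P.nab_addr, hJ_add]
    abel
  have Nsmulr : ∀ (f : C) (X Y : V), nabJ X (f • Y) = f • nabJ X Y := by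
    intro f X Y
    rw [hnabJ, hnabJ, hJ_smul, P.nab_leibniz, P.nab_leibniz, hJ_add, hJ_smul, hJ_smul,
      smul_sub]
    abel
  have Nnegl : ∀ X Y : V, nabJ (-X) Y = - nabJ X Y := by
    intro X Y
    rw [show (-X) = (-1 : C) • X from (neg_one_smul C X).symm, Nsmull, neg_one_smul]
  have Nnegr : ∀ X Y : V, nabJ X (-Y) = - nabJ X Y := by
    intro X Y
    rw [show (-Y) = (-1 : C) • Y from (neg_one_smul C Y).symm, Nsmulr, neg_one_smul]
  have Jsub : ∀ u v : V, J (u - v) = J u - J v := by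
    intro u v
    rw [sub_eq_add_neg, hJ_add, Jneg, sub_eq_add_neg]
  have NJ : ∀ X Y : V, nabJ X (J Y) = - J (nabJ X Y) := by
    intro X Y
    rw [hnabJ X (J Y), hnabJ X Y, hJJ Y, nabnegr, Jsub, hJJ (P.nab X Y)]
    abel
  -- S1 : skewness of (Y,Z) ↦ g(∇J(X,Y),Z)
  have hS1 : ∀ X Y Z : V, P.g (nabJ X Y) Z = - P.g (nabJ X Z) Y := by
    intro X Y Z
    have mc1 := P.metric_compat X (J Y) Z
    have mc2 := P.metric_compat X (J Z) Y
    have hz : P.g (J Y) Z + P.g (J Z) Y = 0 := by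
      rw [gJswap Y Z, P.g_symm (J Z) Y]
      ring
    have hact : P.act X (P.g (J Y) Z) + P.act X (P.g (J Z) Y) = 0 := by
      rw [← P.act_add, hz, act0]
    have e1 : P.g (nabJ X Y) Z = P.g (P.nab X (J Y)) Z - P.g (J (P.nab X Y)) Z := by
      rw [hnabJ, gsubl]
    have e2 : P.g (nabJ X Z) Y = P.g (P.nab X (J Z)) Y - P.g (J (P.nab X Z)) Y := by
      rw [hnabJ, gsubl]
    have j1 := gJswap (P.nab X Y) Z
    have j2 := gJswap (P.nab X Z) Y
    have s1 := P.g_symm (J Y) (P.nab X Z)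
    have s2 := P.g_symm (J Z) (P.nab X Y)
    linear_combination e1 + e2 + hact - mc1 - mc2 - j1 - j2 - s1 - s2
  have hS2 : ∀ X Y Z : V, P.g (nabJ X (J Y)) Z = P.g (nabJ X Y) (J Z) := by
    intro X Y Z
    rw [NJ, gnegl, gJswap]
    ring
  -- ===== frame extension / contraction helpers =====
  have extzero : ∀ (T : V → C), (∀ u v, T (u + v) = T u + T v) →
      (∀ (f : C) (u : V), T (f • u) = f * T u) → (∀ i, T (E i) = 0) → ∀ v, T v = 0 := by
    intro T hadd hsmul h0 v
    have h1 : T v = T (∑ i, P.g v (E i) • E i) := by rw [hframe]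
    rw [h1, sumC T hadd]
    apply Finset.sum_eq_zero
    intro i _
    rw [hsmul, h0, mul_zero]
  have contr : ∀ (T : V → C), (∀ u v, T (u + v) = T u + T v) →
      (∀ (f : C) (u : V), T (f • u) = f * T u) → ∀ v, (∑ i, P.g v (E i) * T (E i)) = T v := by
    intro T hadd hsmul v
    conv_rhs => rw [← hframe v]
    rw [sumC T hadd]
    exact Finset.sum_congr rfl fun i _ => (hsmul _ _).symm
  have Nsumr : ∀ (X : V) (f : Fin 4 → C) (v : Fin 4 → V),
      nabJ X (∑ i, f i • v i) = ∑ i, f i • nabJ X (v i) := by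
    intro X f v
    rw [sumV (fun u => nabJ X u) (Naddr X) (fun i => f i • v i)]
    exact Finset.sum_congr rfl fun i _ => Nsmulr _ _ _
  have Nsuml : ∀ (Y : V) (f : Fin 4 → C) (v : Fin 4 → V),
      nabJ (∑ i, f i • v i) Y = ∑ i, f i • nabJ (v i) Y := by
    intro Y f v
    rw [sumV (fun u => nabJ u Y) (fun a b => Naddl a b Y) (fun i => f i • v i)]
    exact Finset.sum_congr rfl fun i _ => Nsmull _ _ _
  have hJE : ∀ a, J (E a) = ∑ m, P.g (J (E a)) (E m) • E m := fun a => (hframe _).symm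
  have hQc : ∀ a b : Fin 4, (∑ m, P.g (J (E a)) (E m) * P.g (J (E m)) (E b))
      = -(if a = b then 1 else 0) := by
    intro a b
    have h1 : P.g (J (J (E a))) (E b) = ∑ m, P.g (J (E a)) (E m) * P.g (J (E m)) (E b) := by
      conv_lhs => rw [hJE a]
      rw [Jsum, gsuml]
    have h2 : P.g (J (J (E a))) (E b) = -(if a = b then 1 else 0) := by
      rw [hJJ, gnegl, hON]
    rw [← h1, h2]
  have hpair : ∀ X0 Y Z U W0 : V, P.g (nabJ X0 (Y)) (Z) * P.g (J (U)) (W0) - P.g (nabJ X0 (Y)) (U) * P.g (J (Z)) (W0) + P.g (nabJ X0 (Y)) (W0) * P.g (J (Z)) (U) + P.g (nabJ X0 (Z)) (U) * P.g (J (Y)) (W0) - P.g (nabJ X0 (Z)) (W0) * P.g (J (Y)) (U) + P.g (nabJ X0 (U)) (W0) * P.g (J (Y)) (Z) = 0 := by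
    intro X0
    have hsJc : ∀ a b : Fin 4, P.g (J (E a)) (E b) = - P.g (J (E b)) (E a) := by
      intro a b
      rw [gJswap, P.g_symm]
    have hsFc : ∀ a b : Fin 4, P.g (nabJ X0 (E a)) (E b) = - P.g (nabJ X0 (E b)) (E a) :=
      fun a b => hS1 X0 (E a) (E b)
    have hQd : ∀ a : Fin 4, P.g (J (E a)) (E 0) * P.g (J (E 0)) (E a)
        + P.g (J (E a)) (E 1) * P.g (J (E 1)) (E a)
        + P.g (J (E a)) (E 2) * P.g (J (E 2)) (E a)
        + P.g (J (E a)) (E 3) * P.g (J (E 3)) (E a) = -1 := by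
      intro a
      have h := hQc a a
      rw [Fin.sum_univ_four, if_pos rfl] at h
      exact h
    have hQo : ∀ a b : Fin 4, a ≠ b → P.g (J (E a)) (E 0) * P.g (J (E 0)) (E b)
        + P.g (J (E a)) (E 1) * P.g (J (E 1)) (E b)
        + P.g (J (E a)) (E 2) * P.g (J (E 2)) (E b)
        + P.g (J (E a)) (E 3) * P.g (J (E 3)) (E b) = 0 := by
      intro a b hab
      have h := hQc a b
      rw [Fin.sum_univ_four, if_neg hab, neg_zero] at h
      exact h
    have hRc : ∀ a b : Fin 4, P.g (J (E a)) (E 0) * P.g (nabJ X0 (E 0)) (E b)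
        + P.g (J (E a)) (E 1) * P.g (nabJ X0 (E 1)) (E b)
        + P.g (J (E a)) (E 2) * P.g (nabJ X0 (E 2)) (E b)
        + P.g (J (E a)) (E 3) * P.g (nabJ X0 (E 3)) (E b)
        = P.g (J (E b)) (E 0) * P.g (nabJ X0 (E a)) (E 0)
        + P.g (J (E b)) (E 1) * P.g (nabJ X0 (E a)) (E 1)
        + P.g (J (E b)) (E 2) * P.g (nabJ X0 (E a)) (E 2)
        + P.g (J (E b)) (E 3) * P.g (nabJ X0 (E a)) (E 3) := by
      intro a b
      have l : P.g (nabJ X0 (J (E a))) (E b)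
          = ∑ m, P.g (J (E a)) (E m) * P.g (nabJ X0 (E m)) (E b) := by
        conv_lhs => rw [hJE a]
        rw [Nsumr, gsuml]
      have r : P.g (nabJ X0 (E a)) (J (E b))
          = ∑ m, P.g (J (E b)) (E m) * P.g (nabJ X0 (E a)) (E m) := by
        conv_lhs => rw [hJE b]
        rw [gsumr]
      have s := hS2 X0 (E a) (E b)
      have h := (l.symm.trans s).trans r
      rw [Fin.sum_univ_four, Fin.sum_univ_four] at h
      exact h
    have hfr := corePf (fun a b => P.g (J (E a)) (E b)) (fun a b => P.g (nabJ X0 (E a)) (E b))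
      hsJc hsFc hQd hQo hRc
    have p1 : ∀ (a b c : Fin 4) (W0 : V), P.g (nabJ X0 (E a)) (E b) * P.g (J (E c)) (W0) - P.g (nabJ X0 (E a)) (E c) * P.g (J (E b)) (W0) + P.g (nabJ X0 (E a)) (W0) * P.g (J (E b)) (E c) + P.g (nabJ X0 (E b)) (E c) * P.g (J (E a)) (W0) - P.g (nabJ X0 (E b)) (W0) * P.g (J (E a)) (E c) + P.g (nabJ X0 (E c)) (W0) * P.g (J (E a)) (E b) = 0 := by
      intro a b c
      apply extzero
      · intro u v
        simp only [hJ_add, Naddr, P.g_addl, gaddr]; ring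
      · intro f u
        simp only [hJ_smul, Nsmulr, P.g_smull, gsmulr]; ring
      · intro i
        have h := hfr a b c i
        linear_combination h
    have p2 : ∀ (a b : Fin 4) (U W0 : V), P.g (nabJ X0 (E a)) (E b) * P.g (J (U)) (W0) - P.g (nabJ X0 (E a)) (U) * P.g (J (E b)) (W0) + P.g (nabJ X0 (E a)) (W0) * P.g (J (E b)) (U) + P.g (nabJ X0 (E b)) (U) * P.g (J (E a)) (W0) - P.g (nabJ X0 (E b)) (W0) * P.g (J (E a)) (U) + P.g (nabJ X0 (U)) (W0) * P.g (J (E a)) (E b) = 0 := by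
      intro a b U W0
      refine extzero (fun u => P.g (nabJ X0 (E a)) (E b) * P.g (J (u)) (W0) - P.g (nabJ X0 (E a)) (u) * P.g (J (E b)) (W0) + P.g (nabJ X0 (E a)) (W0) * P.g (J (E b)) (u) + P.g (nabJ X0 (E b)) (u) * P.g (J (E a)) (W0) - P.g (nabJ X0 (E b)) (W0) * P.g (J (E a)) (u) + P.g (nabJ X0 (u)) (W0) * P.g (J (E a)) (E b)) ?_ ?_ (fun i => p1 a b i W0) U
      · intro u v
        simp only [hJ_add, Naddr, P.g_addl, gaddr]; ring
      · intro f u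
        simp only [hJ_smul, Nsmulr, P.g_smull, gsmulr]; ring
    have p3 : ∀ (a : Fin 4) (Z U W0 : V), P.g (nabJ X0 (E a)) (Z) * P.g (J (U)) (W0) - P.g (nabJ X0 (E a)) (U) * P.g (J (Z)) (W0) + P.g (nabJ X0 (E a)) (W0) * P.g (J (Z)) (U) + P.g (nabJ X0 (Z)) (U) * P.g (J (E a)) (W0) - P.g (nabJ X0 (Z)) (W0) * P.g (J (E a)) (U) + P.g (nabJ X0 (U)) (W0) * P.g (J (E a)) (Z) = 0 := by
      intro a Z U W0
      refine extzero (fun u => P.g (nabJ X0 (E a)) (u) * P.g (J (U)) (W0) - P.g (nabJ X0 (E a)) (U) * P.g (J (u)) (W0) + P.g (nabJ X0 (E a)) (W0) * P.g (J (u)) (U) + P.g (nabJ X0 (u)) (U) * P.g (J (E a)) (W0) - P.g (nabJ X0 (u)) (W0) * P.g (J (E a)) (U) + P.g (nabJ X0 (U)) (W0) * P.g (J (E a)) (u)) ?_ ?_ (fun i => p2 a i U W0) Z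
      · intro u v
        simp only [hJ_add, Naddr, P.g_addl, gaddr]; ring
      · intro f u
        simp only [hJ_smul, Nsmulr, P.g_smull, gsmulr]; ring
    intro Y Z U W0
    refine extzero (fun u => P.g (nabJ X0 (u)) (Z) * P.g (J (U)) (W0) - P.g (nabJ X0 (u)) (U) * P.g (J (Z)) (W0) + P.g (nabJ X0 (u)) (W0) * P.g (J (Z)) (U) + P.g (nabJ X0 (Z)) (U) * P.g (J (u)) (W0) - P.g (nabJ X0 (Z)) (W0) * P.g (J (u)) (U) + P.g (nabJ X0 (U)) (W0) * P.g (J (u)) (Z)) ?_ ?_ (fun i => p3 i Z U W0) Y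
    · intro u v
      simp only [hJ_add, Naddr, P.g_addl, gaddr]; ring
    · intro f u
      simp only [hJ_smul, Nsmulr, P.g_smull, gsmulr]; ring
  have hgJE : ∀ (i : Fin 4) (W0 : V), P.g (J (E i)) W0 = - P.g (J W0) (E i) := by
    intro i W0
    rw [gJswap, P.g_symm (E i) (J W0)]
  have hI : ∀ Y Z W0 : V,
      - P.g (nabJ (J W0) Y) Z + (∑ i, P.g (nabJ (E i) (E i)) (Y)) * P.g (J Z) W0 + P.g (nabJ (J Z) Y) W0
      - (∑ i, P.g (nabJ (E i) (E i)) (Z)) * P.g (J Y) W0 - P.g (nabJ (J Y) Z) W0 + (∑ i, P.g (nabJ (E i) (E i)) (W0)) * P.g (J Y) Z = 0 := by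
    intro Y Z W0
    have hsum : ∑ i, (P.g (nabJ (E i) (Y)) (Z) * P.g (J (E i)) (W0) - P.g (nabJ (E i) (Y)) (E i) * P.g (J (Z)) (W0) + P.g (nabJ (E i) (Y)) (W0) * P.g (J (Z)) (E i) + P.g (nabJ (E i) (Z)) (E i) * P.g (J (Y)) (W0) - P.g (nabJ (E i) (Z)) (W0) * P.g (J (Y)) (E i) + P.g (nabJ (E i) (E i)) (W0) * P.g (J (Y)) (Z)) = 0 :=
      Finset.sum_eq_zero (fun i _ => hpair (E i) Y Z (E i) W0)
    simp only [Finset.sum_add_distrib, Finset.sum_sub_distrib] at hsum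
    have c1 : ∑ i, P.g (nabJ (E i) Y) Z * P.g (J (E i)) W0 = - P.g (nabJ (J W0) Y) Z := by
      have t : ∀ i ∈ Finset.univ, P.g (nabJ (E i) Y) Z * P.g (J (E i)) W0
          = -(P.g (J W0) (E i) * P.g (nabJ (E i) Y) Z) := by
        intro i _
        rw [hgJE]
        ring
      rw [Finset.sum_congr rfl t, Finset.sum_neg_distrib,
        contr (fun v => P.g (nabJ v Y) Z)
          (fun u v => by simp only [Naddl, P.g_addl])
          (fun f u => by simp only [Nsmull, P.g_smull]) (J W0)]
    have c2 : ∑ i, P.g (nabJ (E i) Y) (E i) * P.g (J Z) W0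
        = -((∑ i, P.g (nabJ (E i) (E i)) (Y)) * P.g (J Z) W0) := by
      rw [← Finset.sum_mul, ← neg_mul, ← Finset.sum_neg_distrib]
      congr 1
      exact Finset.sum_congr rfl fun i _ => by rw [hS1 (E i) Y (E i)]
    have c3 : ∑ i, P.g (nabJ (E i) Y) W0 * P.g (J Z) (E i) = P.g (nabJ (J Z) Y) W0 := by
      have t : ∀ i ∈ Finset.univ, P.g (nabJ (E i) Y) W0 * P.g (J Z) (E i)
          = P.g (J Z) (E i) * P.g (nabJ (E i) Y) W0 := fun i _ => mul_comm _ _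
      rw [Finset.sum_congr rfl t,
        contr (fun v => P.g (nabJ v Y) W0)
          (fun u v => by simp only [Naddl, P.g_addl])
          (fun f u => by simp only [Nsmull, P.g_smull]) (J Z)]
    have c4 : ∑ i, P.g (nabJ (E i) Z) (E i) * P.g (J Y) W0
        = -((∑ i, P.g (nabJ (E i) (E i)) (Z)) * P.g (J Y) W0) := by
      rw [← Finset.sum_mul, ← neg_mul, ← Finset.sum_neg_distrib]
      congr 1
      exact Finset.sum_congr rfl fun i _ => by rw [hS1 (E i) Z (E i)]
    have c5 : ∑ i, P.g (nabJ (E i) Z) W0 * P.g (J Y) (E i) = P.g (nabJ (J Y) Z) W0 := by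
      have t : ∀ i ∈ Finset.univ, P.g (nabJ (E i) Z) W0 * P.g (J Y) (E i)
          = P.g (J Y) (E i) * P.g (nabJ (E i) Z) W0 := fun i _ => mul_comm _ _
      rw [Finset.sum_congr rfl t,
        contr (fun v => P.g (nabJ v Z) W0)
          (fun u v => by simp only [Naddl, P.g_addl])
          (fun f u => by simp only [Nsmull, P.g_smull]) (J Y)]
    have c6 : ∑ i, P.g (nabJ (E i) (E i)) W0 * P.g (J Y) Z
        = (∑ i, P.g (nabJ (E i) (E i)) (W0)) * P.g (J Y) Z := by
      rw [← Finset.sum_mul]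
    linear_combination hsum - c1 + c2 - c3 - c4 + c5 - c6
  have hII : ∀ Y Z W0 : V,
      P.g (nabJ Z Y) W0 - P.g (nabJ W0 Y) Z + P.g (nabJ Y Z) W0
      + (∑ i, P.g (nabJ (E i) (E i)) (J Y)) * P.g (J Z) W0 + (∑ i, P.g (nabJ (E i) (E i)) (Z)) * P.g Y W0 - (∑ i, P.g (nabJ (E i) (E i)) (W0)) * P.g Y Z = 0 := by
    intro Y Z W0
    have h := hI (J Y) Z W0
    rw [← hint W0 Y, ← hint Z Y, hJJ Y, Nnegl, gnegl, gnegl, gnegl] at h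
    linear_combination h
  have hstar : ∀ X Y Z : V, P.g (nabJ X Y) Z + P.g (nabJ X Y) Z
      = (∑ i, P.g (nabJ (E i) (E i)) (J Y)) * P.g (J Z) X + (∑ i, P.g (nabJ (E i) (E i)) (J Z)) * P.g (J X) Y
      + (∑ i, P.g (nabJ (E i) (E i)) (Z)) * P.g X Y - (∑ i, P.g (nabJ (E i) (E i)) (Y)) * P.g X Z := by
    intro X Y Z
    have h1 := hII Y Z X
    have h2 := hII Z X Y
    have s1 := hS1 Z Y X
    have s2 := hS1 X Y Z
    have g1 := P.g_symm Y X
    have g2 := P.g_symm Y Z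
    have g3 := P.g_symm Z X
    linear_combination (-1 : C) * h1 - h2 + s1 + s2 - (∑ i, P.g (nabJ (E i) (E i)) (X)) * g2 + (∑ i, P.g (nabJ (E i) (E i)) (Z)) * g1
      - (∑ i, P.g (nabJ (E i) (E i)) (Y)) * g3
  -- ===== the Lee vector field =====
  have hBc : ∀ X : V, P.g B X = (∑ i, P.g (nabJ (E i) (E i)) (J X)) := by
    intro X
    rw [hB, hθ]
  have hJBc : ∀ X : V, P.g (J B) X = (∑ i, P.g (nabJ (E i) (E i)) (X)) := by
    intro X
    have h1 := gJswap B X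
    rw [hBc (J X), hJJ] at h1
    have h2 : (∑ i, P.g (nabJ (E i) (E i)) (-X)) = - (∑ i, P.g (nabJ (E i) (E i)) (X)) := by
      rw [← Finset.sum_neg_distrib]
      exact Finset.sum_congr rfl fun i _ => gnegr _ _
    rw [h2, neg_neg] at h1
    exact h1
  -- ===== Λ² helpers =====
  have hWsm : ∀ w : W, (1/2 : ℝ) • w = hf • w := by
    intro w
    rw [hfdef, smul_assoc, one_smul]
  have gWaddr : ∀ a b c : W, gW a (b + c) = gW a b + gW a c := by
    intro a b c
    rw [hgW_symm, hgW_addl, hgW_symm b, hgW_symm c]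
  have gWneg : ∀ a b : W, gW (-a) b = - gW a b := by
    intro a b
    rw [show (-a) = (-1 : C) • a from (neg_one_smul C a).symm, hgW_smull]
    ring
  have gWsub : ∀ a b c : W, gW (a - b) c = gW a c - gW b c := by
    intro a b c
    rw [sub_eq_add_neg, hgW_addl, gWneg, sub_eq_add_neg]
  -- ===== conclusion =====
  intro X
  have key : ∀ Y Z : V,
      gW (nabW X 𝔍 - (1/2 : ℝ) • (wedge (J X) B + wedge X (J B))) (wedge Y Z) = 0 := by
    intro Y Z
    rw [gWsub, hWsm, hgW_smull, hgW_addl]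
    have hm := hnabW_metric X 𝔍 (wedge Y Z)
    have ea : P.act X (gW 𝔍 (wedge Y Z)) = hf * P.act X (P.g (J Y) Z) := by
      rw [h𝔍, hsmC, actsm]
    have eb : gW 𝔍 (nabW X (wedge Y Z))
        = hf * P.g (J (P.nab X Y)) Z + hf * P.g (J Y) (P.nab X Z) := by
      rw [hnabW_wedge, gWaddr, h𝔍, h𝔍, hsmC, hsmC]
    have emc := P.metric_compat X (J Y) Z
    have esub : P.g (nabJ X Y) Z = P.g (P.nab X (J Y)) Z - P.g (J (P.nab X Y)) Z := by
      rw [hnabJ, gsubl]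
    have eA := hstar X Y Z
    have w1 := hgW (J X) B Y Z
    have w2 := hgW X (J B) Y Z
    rw [hsmC] at w1 w2
    rw [hBc Z, hBc Y] at w1
    rw [hJBc Z, hJBc Y] at w2
    have egj : P.g (J Z) X = - P.g (J X) Z := by
      rw [gJswap Z X, P.g_symm Z (J X)]
    linear_combination (-1 : C) * hm + ea - eb + hf * emc - hf * esub - hf * w1 - hf * w2
      + hf * hf * eA - (hf * P.g (nabJ X Y) Z) * hf2 + hf * hf * (∑ i, P.g (nabJ (E i) (E i)) (J Y)) * egj
  have hz := hgW_nondeg _ key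
  exact sub_eq_zero.mp hz
end

section
/- Let (M,g,J) be a 4-dimensional Hermitian manifold with Lee vector field B. Then 2 g(Trace{X → (∇²_{XX}J)(Z)}, U) = ||B||² g(Z,JU) - dθ(JZ,U) - dθ(Z,JU) for all Z, U ∈ T_pM, where the trace is taken over an orthonormal basis of T_pM, ∇²_{XY}J = ∇_X∇_Y J - ∇_{∇_X Y}J is the second covariant derivative, and θ is the Lee form. -/
/-- Let `(M,g,J)` be a 4-dimensional Hermitian manifold with Lee form `θ`
and Lee vector field `B` (so `θ(X) = g(B,X)`), for which integrability gives
`2(∇_X J)Y = g(JX,Y)B - g(B,Y)JX + g(X,Y)JB - g(JB,Y)X`.  Then, with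
`∇²_{X,Y}J = ∇_X ∇_Y J - ∇_{∇_X Y} J` the second covariant derivative and the trace
taken over an orthonormal basis `E₁,...,E₄` of `T_pM`,
`2 g(Trace{X ↦ (∇²_{XX}J)Z}, U) = ‖B‖² g(Z,JU) - dθ(JZ,U) - dθ(Z,JU)` for all `Z,U`. -/
theorem stmt14
    {C V : Type*} [CommRing C] [Algebra ℝ C] [AddCommGroup V] [Module C V]
    (P : RiemPkg C V)
    (E : Fin 4 → V)
    (hON : ∀ i j, P.g (E i) (E j) = if i = j then 1 else 0)
    (hframe : ∀ X : V, ∑ i, P.g X (E i) • E i = X)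
    (J : V → V)
    (hJ_add : ∀ X Y, J (X + Y) = J X + J Y)
    (hJ_smul : ∀ (f : C) (X), J (f • X) = f • J X)
    (hJJ : ∀ X, J (J X) = -X)
    (hJg : ∀ X Y, P.g (J X) (J Y) = P.g X Y)
    (nabJ : V → V → V)
    (hnabJ : ∀ X Y, nabJ X Y = P.nab X (J Y) - J (P.nab X Y))
    -- Lee vector field `B` and Lee form `θ`; `J` is Hermitian (integrable), so that
    -- `2(∇_X J)Y = g(JX,Y)B - g(B,Y)JX + g(X,Y)JB - g(JB,Y)X`:
    (B : V)
    (θ : V → C) (hθ : ∀ X, θ X = P.g B X)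
    (hLee : ∀ X Y, 2 • nabJ X Y
      = P.g (J X) Y • B - P.g B Y • J X + P.g X Y • J B - P.g (J B) Y • X)
    -- `dθ` and the second covariant derivative of `J`:
    (dθ : V → V → C)
    (hdθ : ∀ X Y, dθ X Y = P.act X (θ Y) - P.act Y (θ X) - θ (P.bra X Y))
    (nab2J : V → V → V → V)
    (hnab2J : ∀ X Y Z, nab2J X Y Z
      = P.nab X (nabJ Y Z) - nabJ Y (P.nab X Z) - nabJ (P.nab X Y) Z) :
    ∀ Z U : V,
      2 * P.g (∑ i, nab2J (E i) (E i) Z) U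
        = P.g B B * P.g Z (J U) - dθ (J Z) U - dθ Z (J U) := by
  intro Z U
  -- ## basic lemmas about g
  have g_negl : ∀ X Y : V, P.g (-X) Y = -P.g X Y := by
    intro X Y
    rw [← neg_one_smul C X, P.g_smull]; ring
  have g_negr : ∀ X Y : V, P.g X (-Y) = -P.g X Y := by
    intro X Y
    rw [P.g_symm, g_negl, P.g_symm Y X]
  have g_subl : ∀ X Y W : V, P.g (X - Y) W = P.g X W - P.g Y W := by
    intro X Y W
    rw [sub_eq_add_neg, P.g_addl, g_negl]; ring
  have g_subr : ∀ X Y W : V, P.g X (Y - W) = P.g X Y - P.g X W := by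
    intro X Y W
    rw [P.g_symm, g_subl, P.g_symm Y X, P.g_symm W X]
  -- ## basic lemmas about act
  have act_one : ∀ X : V, P.act X 1 = 0 := by
    intro X
    have h := P.act_mul X 1 1
    rw [one_mul, one_mul, mul_one] at h
    linear_combination -h
  have act_two : ∀ X : V, P.act X 2 = 0 := by
    intro X
    have h : (2 : C) = 1 + 1 := by norm_num
    rw [h, P.act_add, act_one]; ring
  have act_two_mul : ∀ (X : V) (f : C), P.act X ((2:C) * f) = 2 * P.act X f := by
    intro X f
    have h := P.act_mul X 2 f
    rw [act_two] at h
    linear_combination h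
  have act_zero : ∀ X : V, P.act X 0 = 0 := by
    intro X
    have h := P.act_add X 0 0
    rw [add_zero] at h
    linear_combination -h
  have act_neg : ∀ (X : V) (f : C), P.act X (-f) = -P.act X f := by
    intro X f
    have h := P.act_add X f (-f)
    rw [add_neg_cancel, act_zero] at h
    linear_combination -h
  have act_sub : ∀ (X : V) (f h : C), P.act X (f - h) = P.act X f - P.act X h := by
    intro X f h
    rw [sub_eq_add_neg, P.act_add, act_neg]; ring
  -- ## skew-symmetry of g(J·,·)
  have sk : ∀ A W : V, P.g (J A) W = -P.g A (J W) := by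
    intro A W
    have h := hJg A (J W)
    rw [hJJ W, g_negr] at h
    linear_combination -h
  -- ## ∇(JY) = (∇J)Y + J∇Y
  have hnabJ' : ∀ X Y : V, P.nab X (J Y) = nabJ X Y + J (P.nab X Y) := by
    intro X Y
    rw [hnabJ]; abel
  -- ## the Lee relation paired with a vector
  have hL2 : ∀ A B' W : V, 2 * P.g (nabJ A B') W
      = P.g (J A) B' * P.g B W - P.g B B' * P.g (J A) W
        + P.g A B' * P.g (J B) W - P.g (J B) B' * P.g A W := by
    intro A B' W
    have h := congrArg (fun t => P.g t W) (hLee A B')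
    simp only [two_nsmul] at h
    simp only [P.g_addl, g_subl, P.g_smull] at h
    linear_combination h
  -- ## sums
  have gsum : ∀ (v : Fin 4 → V) (W : V), P.g (∑ i, v i) W = ∑ i, P.g (v i) W := by
    intro v W
    exact map_sum (AddMonoidHom.mk' (fun x => P.g x W) (fun a b => P.g_addl a b W)) v Finset.univ
  have nabsum : ∀ (v : Fin 4 → V) (W : V),
      P.g (P.nab (∑ i, v i) B) W = ∑ i, P.g (P.nab (v i) B) W := by
    intro v W
    exact map_sum (AddMonoidHom.mk' (fun x => P.g (P.nab x B) W)
      (fun a b => by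
        show P.g (P.nab (a + b) B) W = P.g (P.nab a B) W + P.g (P.nab b B) W
        rw [P.nab_addl, P.g_addl])) v Finset.univ
  have c1 : ∀ A W : V, ∑ i, P.g A (E i) * P.g (E i) W = P.g A W := by
    intro A W
    calc ∑ i, P.g A (E i) * P.g (E i) W
        = ∑ i, P.g (P.g A (E i) • E i) W := by
          refine Finset.sum_congr rfl fun i _ => ?_
          rw [P.g_smull]
      _ = P.g (∑ i, P.g A (E i) • E i) W := (gsum _ W).symm
      _ = P.g A W := by rw [hframe]
  have c2'' : ∀ A W : V, ∑ i, P.g A (E i) * P.g (P.nab (E i) B) W = P.g (P.nab A B) W := by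
    intro A W
    calc ∑ i, P.g A (E i) * P.g (P.nab (E i) B) W
        = ∑ i, P.g (P.nab (P.g A (E i) • E i) B) W := by
          refine Finset.sum_congr rfl fun i _ => ?_
          rw [P.nab_smull, P.g_smull]
      _ = P.g (P.nab (∑ i, P.g A (E i) • E i) B) W := (nabsum _ W).symm
      _ = P.g (P.nab A B) W := by rw [hframe]
  have c2' : ∀ A W : V, ∑ i, P.g (E i) A * P.g (P.nab (E i) B) W = P.g (P.nab A B) W := by
    intro A W
    rw [← c2'' A W]
    exact Finset.sum_congr rfl fun i _ => by rw [P.g_symm (E i) A]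
  have c3 : ∑ i, P.g (E i) (E i) = (4:C) := by
    have : ∀ i : Fin 4, P.g (E i) (E i) = (1:C) := fun i => by rw [hON]; simp
    rw [Finset.sum_congr rfl fun i _ => this i]
    simp
  -- ## the key pointwise identity
  have key4 : ∀ X : V, 4 * P.g (nab2J X X Z) U =
      ( P.g (J X) X * P.g B Z - P.g B X * P.g (J X) Z + P.g X X * P.g (J B) Z
        - P.g (J B) X * P.g X Z ) * P.g B U
      + 2 * (P.g (J X) Z * P.g (P.nab X B) U)
      - 2 * (P.g (P.nab X B) Z * P.g (J X) U)
      - P.g B Z * ( P.g (J X) X * P.g B U - P.g B X * P.g (J X) U + P.g X X * P.g (J B) U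
        - P.g (J B) X * P.g X U )
      + P.g X Z * ( (P.g (J X) B * P.g B U - P.g B B * P.g (J X) U + P.g X B * P.g (J B) U
        - P.g (J B) B * P.g X U) + 2 * P.g (J (P.nab X B)) U )
      - ( (P.g (J X) B * P.g B Z - P.g B B * P.g (J X) Z + P.g X B * P.g (J B) Z
        - P.g (J B) B * P.g X Z) + 2 * P.g (J (P.nab X B)) Z ) * P.g X U := by
    intro X
    rw [hnab2J, g_subl, g_subl]
    have e4 := congrArg (P.act X) (hL2 X Z U)
    rw [act_two_mul] at e4
    simp only [act_sub, P.act_add, P.act_mul, P.metric_compat, hnabJ', P.g_addl] at e4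
    linear_combination 2*e4 - 2*hL2 X Z (P.nab X U) - 2*hL2 X (P.nab X Z) U
      - 2*hL2 (P.nab X X) Z U + P.g B U * hL2 X X Z - P.g B Z * hL2 X X U
      + P.g X Z * hL2 X B U - P.g X U * hL2 X B Z
  -- ## normalisation to a contraction-ready form
  have norm : ∀ X : V,
      ( P.g (J X) X * P.g B Z - P.g B X * P.g (J X) Z + P.g X X * P.g (J B) Z
        - P.g (J B) X * P.g X Z ) * P.g B U
      + 2 * (P.g (J X) Z * P.g (P.nab X B) U)
      - 2 * (P.g (P.nab X B) Z * P.g (J X) U)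
      - P.g B Z * ( P.g (J X) X * P.g B U - P.g B X * P.g (J X) U + P.g X X * P.g (J B) U
        - P.g (J B) X * P.g X U )
      + P.g X Z * ( (P.g (J X) B * P.g B U - P.g B B * P.g (J X) U + P.g X B * P.g (J B) U
        - P.g (J B) B * P.g X U) + 2 * P.g (J (P.nab X B)) U )
      - ( (P.g (J X) B * P.g B Z - P.g B B * P.g (J X) Z + P.g X B * P.g (J B) Z
        - P.g (J B) B * P.g X Z) + 2 * P.g (J (P.nab X B)) Z ) * P.g X U
      =
        P.g B X * P.g X (J Z) * P.g B U
      + P.g X X * (P.g (J B) Z * P.g B U)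
      - P.g (J B) X * P.g X Z * P.g B U
      - 2 * (P.g X (J Z) * P.g (P.nab X B) U)
      + 2 * (P.g X (J U) * P.g (P.nab X B) Z)
      - P.g B X * P.g X (J U) * P.g B Z
      - P.g X X * (P.g B Z * P.g (J B) U)
      + P.g (J B) X * P.g X U * P.g B Z
      - P.g Z X * P.g X (J B) * P.g B U
      + P.g B B * (P.g Z X * P.g X (J U))
      + P.g Z X * P.g X B * P.g (J B) U
      - 2 * (P.g Z X * P.g (P.nab X B) (J U))
      + P.g U X * P.g X (J B) * P.g B Z
      - P.g B B * (P.g U X * P.g X (J Z))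
      - P.g U X * P.g X B * P.g (J B) Z
      + 2 * (P.g U X * P.g (P.nab X B) (J Z)) := by
    intro X
    rw [sk X Z, sk X U, sk X B, sk (P.nab X B) U, sk (P.nab X B) Z,
        P.g_symm X Z, P.g_symm X U]
    ring
  -- ## trace over the frame
  have hi : ∀ i : Fin 4, 4 * P.g (nab2J (E i) (E i) Z) U =
        P.g B (E i) * P.g (E i) (J Z) * P.g B U
      + P.g (E i) (E i) * (P.g (J B) Z * P.g B U)
      - P.g (J B) (E i) * P.g (E i) Z * P.g B U
      - 2 * (P.g (E i) (J Z) * P.g (P.nab (E i) B) U)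
      + 2 * (P.g (E i) (J U) * P.g (P.nab (E i) B) Z)
      - P.g B (E i) * P.g (E i) (J U) * P.g B Z
      - P.g (E i) (E i) * (P.g B Z * P.g (J B) U)
      + P.g (J B) (E i) * P.g (E i) U * P.g B Z
      - P.g Z (E i) * P.g (E i) (J B) * P.g B U
      + P.g B B * (P.g Z (E i) * P.g (E i) (J U))
      + P.g Z (E i) * P.g (E i) B * P.g (J B) U
      - 2 * (P.g Z (E i) * P.g (P.nab (E i) B) (J U))
      + P.g U (E i) * P.g (E i) (J B) * P.g B Z
      - P.g B B * (P.g U (E i) * P.g (E i) (J Z))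
      - P.g U (E i) * P.g (E i) B * P.g (J B) Z
      + 2 * (P.g U (E i) * P.g (P.nab (E i) B) (J Z)) :=
    fun i => (key4 (E i)).trans (norm (E i))
  have hsum : 4 * P.g (∑ i, nab2J (E i) (E i) Z) U = ∑ i, (
        P.g B (E i) * P.g (E i) (J Z) * P.g B U
      + P.g (E i) (E i) * (P.g (J B) Z * P.g B U)
      - P.g (J B) (E i) * P.g (E i) Z * P.g B U
      - 2 * (P.g (E i) (J Z) * P.g (P.nab (E i) B) U)
      + 2 * (P.g (E i) (J U) * P.g (P.nab (E i) B) Z)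
      - P.g B (E i) * P.g (E i) (J U) * P.g B Z
      - P.g (E i) (E i) * (P.g B Z * P.g (J B) U)
      + P.g (J B) (E i) * P.g (E i) U * P.g B Z
      - P.g Z (E i) * P.g (E i) (J B) * P.g B U
      + P.g B B * (P.g Z (E i) * P.g (E i) (J U))
      + P.g Z (E i) * P.g (E i) B * P.g (J B) U
      - 2 * (P.g Z (E i) * P.g (P.nab (E i) B) (J U))
      + P.g U (E i) * P.g (E i) (J B) * P.g B Z
      - P.g B B * (P.g U (E i) * P.g (E i) (J Z))
      - P.g U (E i) * P.g (E i) B * P.g (J B) Z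
      + 2 * (P.g U (E i) * P.g (P.nab (E i) B) (J Z))) := by
    rw [gsum, Finset.mul_sum]
    exact Finset.sum_congr rfl fun i _ => hi i
  have hc : (∑ i, (
        P.g B (E i) * P.g (E i) (J Z) * P.g B U
      + P.g (E i) (E i) * (P.g (J B) Z * P.g B U)
      - P.g (J B) (E i) * P.g (E i) Z * P.g B U
      - 2 * (P.g (E i) (J Z) * P.g (P.nab (E i) B) U)
      + 2 * (P.g (E i) (J U) * P.g (P.nab (E i) B) Z)
      - P.g B (E i) * P.g (E i) (J U) * P.g B Z
      - P.g (E i) (E i) * (P.g B Z * P.g (J B) U)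
      + P.g (J B) (E i) * P.g (E i) U * P.g B Z
      - P.g Z (E i) * P.g (E i) (J B) * P.g B U
      + P.g B B * (P.g Z (E i) * P.g (E i) (J U))
      + P.g Z (E i) * P.g (E i) B * P.g (J B) U
      - 2 * (P.g Z (E i) * P.g (P.nab (E i) B) (J U))
      + P.g U (E i) * P.g (E i) (J B) * P.g B Z
      - P.g B B * (P.g U (E i) * P.g (E i) (J Z))
      - P.g U (E i) * P.g (E i) B * P.g (J B) Z
      + 2 * (P.g U (E i) * P.g (P.nab (E i) B) (J Z))))
      =
        P.g B (J Z) * P.g B U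
      + 4 * (P.g (J B) Z * P.g B U)
      - P.g (J B) Z * P.g B U
      - 2 * P.g (P.nab (J Z) B) U
      + 2 * P.g (P.nab (J U) B) Z
      - P.g B (J U) * P.g B Z
      - 4 * (P.g B Z * P.g (J B) U)
      + P.g (J B) U * P.g B Z
      - P.g Z (J B) * P.g B U
      + P.g B B * P.g Z (J U)
      + P.g Z B * P.g (J B) U
      - 2 * P.g (P.nab Z B) (J U)
      + P.g U (J B) * P.g B Z
      - P.g B B * P.g U (J Z)
      - P.g U B * P.g (J B) Z
      + 2 * P.g (P.nab U B) (J Z) := by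
    simp only [Finset.sum_add_distrib, Finset.sum_sub_distrib, ← Finset.sum_mul,
      ← Finset.mul_sum]
    rw [c1 B (J Z), c1 (J B) Z, c2' (J Z) U, c2' (J U) Z, c1 B (J U), c1 (J B) U,
      c1 Z (J B), c1 Z (J U), c1 Z B, c2'' Z (J U), c1 U (J B), c1 U (J Z), c1 U B,
      c2'' U (J Z), c3]
  have dθ_eq : ∀ A W : V, dθ A W = P.g (P.nab A B) W - P.g (P.nab W B) A := by
    intro A W
    rw [hdθ, hθ W, hθ A, hθ (P.bra A W), ← P.torsion_free A W]
    have hs := g_subr B (P.nab A W) (P.nab W A)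
    linear_combination P.metric_compat A B W - P.metric_compat W B A - hs
  have total : 4 * P.g (∑ i, nab2J (E i) (E i) Z) U
      = 2 * (P.g B B * P.g Z (J U) - dθ (J Z) U - dθ Z (J U)) := by
    rw [hsum, hc, dθ_eq (J Z) U, dθ_eq Z (J U),
      P.g_symm Z (J B), P.g_symm U (J B), P.g_symm U (J Z), P.g_symm Z B, P.g_symm U B,
      sk B Z, sk B U, sk Z U]
    ring
  have half : ∀ x y : C, x + x = y + y → x = y := by
    intro x y h
    have e : algebraMap ℝ C 2 = (2:C) := map_ofNat _ 2
    have h2 : (2:C) * algebraMap ℝ C 2⁻¹ = 1 := by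
      rw [← e, ← map_mul]
      norm_num
    linear_combination algebraMap ℝ C 2⁻¹ * h - (x - y) * h2
  apply half
  linear_combination total
end
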